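/- arXiv:2506.04189 — 8 statements merged into one kernel-verified Lean document; each statement's English description precedes it below -/
import Mathlib

section
/- Let r ≥ 2 be an integer, let 0 < α < (r+1)/(2r), and let m = m(n) be a function with m(n)/n → 0 as n → ∞. Then for all sufficiently large n divisible by 2r there exists a graph G on n vertices with minimum degree δ(G) ≥ αn such that the following holds: for every graph F on the same vertex set as G with exactly m(n) edges, there exists an r-colouring of the edges of G ∪ F such that every Hamilton cycle of G ∪ F contains exactly n/r edges of each of the r colours. -/
open SimpleGraph Filter
open scoped Classical

lemma countP_or_disj {β : Type*} (l : List β) (p q : β → Bool)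
    (h : ∀ x ∈ l, ¬(p x = true ∧ q x = true)) :
    l.countP (fun x => p x || q x) = l.countP p + l.countP q := by
  induction l with
  | nil => simp
  | cons b l ih =>
    rw [List.countP_cons, List.countP_cons, List.countP_cons,
      ih (fun x hx => h x (List.mem_cons_of_mem _ hx))]
    have := h b List.mem_cons_self
    by_cases hp : p b <;> by_cases hq : q b <;> simp [hp, hq] at this ⊢ <;> omega

lemma countP_eq_sum_aux {β γ : Type*} (l : List β) (p : β → Bool) (S : Finset γ)
    (q : γ → β → Bool)
    (h : ∀ e ∈ l, (if p e then 1 else 0) = ∑ a ∈ S, (if q a e then 1 else 0)) :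
    l.countP p = ∑ a ∈ S, l.countP (q a) := by
  induction l with
  | nil => simp
  | cons b l ih =>
    rw [List.countP_cons]
    have hsum : ∀ a ∈ S, l.countP (q a) + (if q a b then 1 else 0) = List.countP (q a) (b :: l) := by
      intro a _; rw [List.countP_cons]
    rw [ih (fun e he => h e (List.mem_cons_of_mem _ he)), h b List.mem_cons_self,
      ← Finset.sum_add_distrib]
    exact Finset.sum_congr rfl hsum

lemma countP_not_aux {β : Type*} (l : List β) (p : β → Bool) :
    l.countP p + l.countP (fun x => !(p x)) = l.length := by
  induction l with
  | nil => simp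
  | cons b l ih =>
    rw [List.countP_cons, List.countP_cons]
    by_cases hp : p b <;> simp [hp] <;> omega

lemma ham_incidence {V : Type*} [DecidableEq V] [Fintype V] {Γ : SimpleGraph V} {u : V}
    {H : Γ.Walk u u} (hH : H.IsHamiltonianCycle) (v : V) :
    H.edges.countP (fun e => decide (v ∈ e)) = 2 := by
  classical
  have hnil : ¬ H.Nil := hH.isCycle.not_nil
  have hedges : H.edges = H.darts.map SimpleGraph.Dart.edge := rfl
  rw [hedges, List.countP_map]
  have hcongr : ∀ d ∈ H.darts,
      ((fun e => decide (v ∈ e)) ∘ SimpleGraph.Dart.edge) d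
        = true ↔ (fun d : Γ.Dart => (decide (v = d.fst) || decide (v = d.snd))) d = true := by
    rintro ⟨⟨a, b⟩, hadj⟩ _
    simp [SimpleGraph.Dart.edge, Sym2.mem_iff]
  rw [List.countP_congr hcongr, countP_or_disj]
  · have h1 : H.darts.countP (fun d => decide (v = d.fst))
        = (H.darts.map (fun d : Γ.Dart => d.fst)).countP (fun x => decide (v = x)) := by
      rw [List.countP_map]; rfl
    have h2 : H.darts.countP (fun d => decide (v = d.snd))
        = (H.darts.map (fun d : Γ.Dart => d.snd)).countP (fun x => decide (v = x)) := by
      rw [List.countP_map]; rfl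
    have hcount : ∀ l : List V, l.countP (fun x => decide (v = x)) = l.count v := by
      intro l
      rw [List.count]
      exact List.countP_congr (by
        intro x _
        simp only [decide_eq_true_eq, beq_iff_eq]
        exact eq_comm)
    rw [h1, h2, hcount, hcount, SimpleGraph.Walk.map_fst_darts, SimpleGraph.Walk.map_snd_darts]
    have htail : H.support.tail.count v = 1 := by
      rw [← SimpleGraph.Walk.support_tail_of_not_nil H hnil]
      exact hH.isHamiltonian_tail v
    have hsupp : H.support = H.support.dropLast ++ [u] := by
      conv_lhs => rw [← List.dropLast_append_getLast (H.support_ne_nil)]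
      rw [SimpleGraph.Walk.getLast_support]
    have hdl : H.support.dropLast.count v = 1 := by
      by_cases hv : v = u
      · subst hv
        have := hH.count_support_self
        rw [hsupp, List.count_append] at this
        simpa using this
      · have := hH.support_count_of_ne (fun h => hv h.symm)
        rw [hsupp, List.count_append] at this
        simpa [List.count_singleton, hv, Ne.symm hv] using this
    rw [htail, hdl]
  · intro d _
    rintro ⟨h1, h2⟩
    simp only [decide_eq_true_eq] at h1 h2
    exact Γ.ne_of_adj d.adj (h1 ▸ h2 ▸ rfl)

lemma card_filter_le_val (n w : ℕ) (h : w ≤ n) :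
    ((Finset.univ : Finset (Fin n)).filter (fun u => w ≤ u.val)).card = n - w := by
  rcases eq_or_lt_of_le h with rfl | hlt
  · rw [Nat.sub_self]
    rw [Finset.card_eq_zero, Finset.filter_eq_empty_iff]
    intro u _
    simpa using u.isLt
  · have : ((Finset.univ : Finset (Fin n)).filter (fun u => w ≤ u.val)) = Finset.Ici ⟨w, hlt⟩ := by
      ext u
      simp [Fin.le_def]
    rw [this, Fin.card_Ici]

lemma card_filter_lt_val (n w : ℕ) (h : w ≤ n) :
    ((Finset.univ : Finset (Fin n)).filter (fun u => u.val < w)).card = w := by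
  rcases eq_or_lt_of_le h with rfl | hlt
  · rw [Finset.filter_true_of_mem (fun u _ => u.isLt)]
    simp
  · have : ((Finset.univ : Finset (Fin n)).filter (fun u => u.val < w)) = Finset.Iio ⟨w, hlt⟩ := by
      ext u
      simp [Fin.lt_def]
    rw [this, Fin.card_Iio]

lemma card_filter_div (M t k : ℕ) (ht : 0 < t) (hkM : (k+1)*t ≤ M) :
    ((Finset.univ : Finset (Fin M)).filter (fun j => j.val / t = k)).card = t := by
  have step1 : ((Finset.univ : Finset (Fin M)).filter (fun j => j.val / t = k)).card
      = ((Finset.range M).filter (fun j => j / t = k)).card := by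
    apply Finset.card_nbij (i := Fin.val)
    · intro a ha
      simp only [Finset.mem_coe, Finset.mem_filter, Finset.mem_range] at *
      exact ⟨a.isLt, ha.2⟩
    · exact Fin.val_injective.injOn
    · intro j hj
      simp only [Finset.coe_filter, Set.mem_setOf_eq, Finset.mem_range] at hj
      exact ⟨⟨j, hj.1⟩, by simp [hj.2], rfl⟩
  have step2 : ((Finset.range M).filter (fun j => j / t = k)) = Finset.Ico (k*t) (k*t+t) := by
    ext j
    simp only [Finset.mem_filter, Finset.mem_range, Finset.mem_Ico]
    constructor
    · rintro ⟨hjM, rfl⟩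
      have h2 : j < (j / t + 1) * t := (Nat.div_lt_iff_lt_mul ht).mp (Nat.lt_succ_self _)
      have h3 : (j / t + 1) * t = j / t * t + t := Nat.succ_mul _ _
      have h4 : j / t * t ≤ j := Nat.div_mul_le_self j t
      omega
    · rintro ⟨h1, h2⟩
      have h5 : (k + 1) * t = k * t + t := Nat.succ_mul _ _
      have hdiv : j / t = k := by
        have hu : j / t < k + 1 := (Nat.div_lt_iff_lt_mul ht).mpr (by omega)
        have hl : k ≤ j / t := (Nat.le_div_iff_mul_le ht).mpr h1
        omega
      exact ⟨by omega, hdiv⟩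
  rw [step1, step2, Nat.card_Ico]
  omega

/-- For `r ≥ 2`, `0 < α < (r+1)/(2r)` and `m(n) = o(n)`, for all
sufficiently large `n` divisible by `2r` there is a graph `G` on `n` vertices with
minimum degree at least `α n` such that for every graph `F` on the same vertex set with
exactly `m n` edges, some `r`-colouring of `G ⊔ F` makes every Hamilton cycle of `G ⊔ F`
contain exactly `n/r` edges of each colour. -/
theorem stmt_1 (r : ℕ) (hr : 2 ≤ r) (α : ℝ) (hα : 0 < α) (hα' : α < (r + 1) / (2 * r))
    (m : ℕ → ℕ) (hm : Tendsto (fun n => (m n : ℝ) / n) atTop (nhds 0)) :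
    ∃ N : ℕ, ∀ n ≥ N, 2 * r ∣ n →
      ∃ G : SimpleGraph (Fin n),
        (∀ v : Fin n, α * n ≤ ((G.neighborSet v).ncard : ℝ)) ∧
        ∀ F : SimpleGraph (Fin n), F.edgeSet.ncard = m n →
          ∃ χ : Sym2 (Fin n) → Fin r,
            ∀ (u : Fin n) (H : (G ⊔ F).Walk u u), H.IsHamiltonianCycle →
              ∀ c : Fin r, (H.edges.filter fun e => decide (χ e = c)).length = n / r := by
  have hr0 : 0 < r := by omega
  have hr1 : 1 ≤ r := by omega
  have hrR : (0:ℝ) < r := by exact_mod_cast hr0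
  obtain ⟨ε, hεdef⟩ : ∃ ε : ℝ, ε = (r + 1) / (2 * r) - α := ⟨_, rfl⟩
  have hεpos : 0 < ε := by rw [hεdef]; exact sub_pos.2 hα'
  have hεle : ε ≤ 1 := by
    have h1 : ((r:ℝ) + 1) / (2 * r) ≤ 1 := by
      rw [div_le_one (by positivity)]
      have : (1:ℝ) ≤ r := by exact_mod_cast hr1
      linarith
    rw [hεdef]
    linarith
  obtain ⟨N₀, hN₀⟩ := Filter.eventually_atTop.1 (hm.eventually_lt_const (half_pos hεpos))
  refine ⟨max N₀ 4, fun n hn hdvd => ?_⟩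
  have hn4 : 4 ≤ n := le_trans (le_max_right _ _) hn
  have hnR : (0:ℝ) < n := by exact_mod_cast (by omega : 0 < n)
  have hmn : (m n : ℝ) / n < ε / 2 := hN₀ n (le_trans (le_max_left _ _) hn)
  have hmn' : (m n : ℝ) < ε / 2 * n := by
    rw [div_lt_iff₀ hnR] at hmn; exact hmn
  set t := n / (2 * r) with ht_def
  have hnt : 2 * r * t = n := Nat.mul_div_cancel' hdvd
  have ht : 0 < t := by
    rcases Nat.eq_zero_or_pos t with h | h
    · rw [h, Nat.mul_zero] at hnt; omega
    · exact h
  have htR : (0:ℝ) < t := by exact_mod_cast ht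
  have hntR : 2 * (r:ℝ) * t = n := by exact_mod_cast hnt
  set w := (r - 1) * t + m n with hw_def
  have hwR : (w:ℝ) = ((r:ℝ) - 1) * t + m n := by
    rw [hw_def]
    push_cast [Nat.cast_sub hr1]
    ring
  have hrR1 : (1:ℝ) ≤ r := by exact_mod_cast hr1
  have h0ε : (0:ℝ) ≤ (1 - ε) * n := mul_nonneg (by linarith) hnR.le
  have hwnR : (w:ℝ) < n := by
    rw [hwR]
    nlinarith [h0ε, hmn', hntR, htR, hrR1]
  have hwn : w ≤ n := le_of_lt (by exact_mod_cast hwnR)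
  -- the graph: complete graph minus a clique on the first w vertices
  refine ⟨⟨fun u v => u ≠ v ∧ (w ≤ u.val ∨ w ≤ v.val), ?_, ?_⟩, ?_, ?_⟩
  · exact ⟨fun u v ⟨h1, h2⟩ => ⟨h1.symm, h2.symm⟩⟩
  · exact ⟨fun v ⟨h1, _⟩ => h1 rfl⟩
  · -- min degree
    intro v
    set G : SimpleGraph (Fin n) :=
      ⟨fun u v => u ≠ v ∧ (w ≤ u.val ∨ w ≤ v.val), ⟨fun u v ⟨h1, h2⟩ => ⟨h1.symm, h2.symm⟩⟩,
        ⟨fun v ⟨h1, _⟩ => h1 rfl⟩⟩ with hG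
    by_cases hv : w ≤ v.val
    · have hset : G.neighborSet v = {v}ᶜ := by
        ext u
        simp only [SimpleGraph.mem_neighborSet, Set.mem_compl_iff, Set.mem_singleton_iff, hG]
        constructor
        · rintro ⟨h1, _⟩ h; exact h1 h.symm
        · intro h; exact ⟨fun h' => h h'.symm, Or.inl hv⟩
      rw [hset]
      have hcard : ({v}ᶜ : Set (Fin n)).ncard = n - 1 := by
        rw [Set.ncard_eq_toFinset_card']
        simp [Finset.card_compl]
      rw [hcard]
      have hα34 : α ≤ 3 / 4 := by
        have : ((r:ℝ) + 1) / (2 * r) ≤ 3 / 4 := by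
          rw [div_le_div_iff₀ (by positivity) (by norm_num)]
          have : (2:ℝ) ≤ r := by exact_mod_cast hr
          linarith
        linarith
      have hcast : ((n - 1 : ℕ) : ℝ) = (n:ℝ) - 1 := by
        rw [Nat.cast_sub (by omega)]; norm_num
      rw [hcast]
      have hn4R : (4:ℝ) ≤ n := by exact_mod_cast hn4
      nlinarith
    · have hset : G.neighborSet v = {u : Fin n | w ≤ u.val} := by
        ext u
        simp only [SimpleGraph.mem_neighborSet, Set.mem_setOf_eq, hG]
        constructor
        · rintro ⟨h1, h2 | h2⟩
          · exact absurd h2 hv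
          · exact h2
        · intro h
          refine ⟨fun h' => hv ?_, Or.inr h⟩
          rw [h']; exact h
      rw [hset]
      have hsetF : {u : Fin n | w ≤ u.val}
          = ((Finset.univ : Finset (Fin n)).filter (fun u => w ≤ u.val) : Finset (Fin n)) := by
        ext u; simp
      rw [hsetF, Set.ncard_coe_finset, card_filter_le_val n w hwn]
      have hcast : ((n - w : ℕ) : ℝ) = (n:ℝ) - w := by
        rw [Nat.cast_sub hwn]
      rw [hcast, hwR]
      have hkey : ((r:ℝ) + 1) / (2 * r) * n = ((r:ℝ) + 1) * t := by
        rw [← hntR]; field_simp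
      have hαn : α * n = ((r:ℝ) + 1) * t - ε * n := by
        rw [← hkey, hεdef]; ring
      rw [hαn]
      nlinarith
  · -- the colouring part
    intro F hF
    set G : SimpleGraph (Fin n) :=
      ⟨fun u v => u ≠ v ∧ (w ≤ u.val ∨ w ≤ v.val), ⟨fun u v ⟨h1, h2⟩ => ⟨h1.symm, h2.symm⟩⟩,
        ⟨fun v ⟨h1, _⟩ => h1 rfl⟩⟩ with hG
    -- vertex cover of F by larger endpoints
    set C : Finset (Fin n) := Finset.univ.filter (fun v => ∃ u, F.Adj u v ∧ u < v) with hC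
    set φ : Fin n → Sym2 (Fin n) :=
      fun v => if h : ∃ u, F.Adj u v ∧ u < v then s(h.choose, v) else s(v, v) with hφ
    have hCcard : C.card ≤ m n := by
      have hfin : F.edgeSet.Finite := Set.toFinite _
      rw [← hF, Set.ncard_eq_toFinset_card _ hfin]
      apply Finset.card_le_card_of_injOn φ
      · intro v hv
        rw [Finset.mem_coe, hC, Finset.mem_filter] at hv
        obtain ⟨-, h⟩ := hv
        rw [Finset.mem_coe, Set.Finite.mem_toFinset]
        simp only [hφ]
        rw [dif_pos h]
        exact h.choose_spec.1
      · intro v1 h1 v2 h2 heq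
        rw [Finset.mem_coe, hC, Finset.mem_filter] at h1 h2
        obtain ⟨-, hh1⟩ := h1
        obtain ⟨-, hh2⟩ := h2
        simp only [hφ, dif_pos hh1, dif_pos hh2] at heq
        rw [Sym2.eq_iff] at heq
        rcases heq with ⟨-, h⟩ | ⟨ha, hb⟩
        · exact h
        · have l1 := hh1.choose_spec.2
          have l2 := hh2.choose_spec.2
          rw [ha] at l1; rw [← hb] at l2
          exact absurd (l1.trans l2) (lt_irrefl _)
    -- choose the independent set A
    have hA'card : (r - 1) * t ≤ ((Finset.univ.filter (fun v : Fin n => v.val < w)) \ C).card := by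
      have h1 := Finset.le_card_sdiff C (Finset.univ.filter (fun v : Fin n => v.val < w))
      rw [card_filter_lt_val n w hwn] at h1
      omega
    obtain ⟨A, hAsub, hAcard⟩ := Finset.exists_subset_card_eq hA'card
    have hAW : ∀ a ∈ A, a.val < w ∧ a ∉ C := by
      intro a ha
      have := hAsub ha
      rw [Finset.mem_sdiff, Finset.mem_filter] at this
      exact ⟨this.1.2, this.2⟩
    have hAnoadj : ∀ a ∈ A, ∀ b ∈ A, ¬ (G ⊔ F).Adj a b := by
      intro a ha b hb hadj
      rcases hadj with h | h
      · rw [hG] at h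
        rcases h.2 with h' | h'
        · exact absurd h' (not_le.2 (hAW a ha).1)
        · exact absurd h' (not_le.2 (hAW b hb).1)
      · rcases lt_trichotomy a b with hlt | rfl | hlt
        · exact (hAW b hb).2 (by rw [hC, Finset.mem_filter]; exact ⟨Finset.mem_univ _, a, h, hlt⟩)
        · exact F.irrefl h
        · exact (hAW a ha).2
            (by rw [hC, Finset.mem_filter]; exact ⟨Finset.mem_univ _, b, h.symm, hlt⟩)
    -- colour assignment
    set eqv : (A : Finset (Fin n)) ≃ Fin ((r - 1) * t) := Finset.equivFinOfCardEq hAcard with heqv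
    set g : Fin n → ℕ :=
      fun v => if h : v ∈ A then ((eqv ⟨v, h⟩ : Fin ((r - 1) * t)) : ℕ) / t else r - 1 with hg
    have hgA : ∀ v (h : v ∈ A), g v = ((eqv ⟨v, h⟩ : Fin ((r - 1) * t)) : ℕ) / t := by
      intro v h; rw [hg]; exact dif_pos h
    have hgAlt : ∀ v ∈ A, g v < r - 1 := by
      intro v h
      rw [hgA v h]
      have h1 : ((eqv ⟨v, h⟩ : Fin ((r - 1) * t)) : ℕ) < (r - 1) * t := (eqv ⟨v, h⟩).isLt
      exact (Nat.div_lt_iff_lt_mul ht).2 h1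
    have hglt : ∀ v, g v < r := by
      intro v
      by_cases h : v ∈ A
      · exact lt_of_lt_of_le (hgAlt v h) (by omega)
      · rw [hg]; simp only [dif_neg h]; omega
    set q : Sym2 (Fin n) → ℕ :=
      fun e => if h : (A.filter (fun a => a ∈ e)).Nonempty
        then g ((A.filter (fun a => a ∈ e)).min' h) else r - 1 with hq
    have hqlt : ∀ e, q e < r := by
      intro e
      rw [hq]
      by_cases h : (A.filter (fun a => a ∈ e)).Nonempty
      · simp only [dif_pos h]; exact hglt _
      · simp only [dif_neg h]; omega
    refine ⟨fun e => ⟨q e, hqlt e⟩, ?_⟩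
    intro u H hH c
    -- basic facts about the Hamilton cycle
    have hle1 : ∀ e ∈ H.edges, (A.filter (fun a => a ∈ e)).card ≤ 1 := by
      intro e he
      refine Finset.card_le_one.2 fun a ha b hb => ?_
      rw [Finset.mem_filter] at ha hb
      by_contra hne
      have hee : e = s(a, b) := (Sym2.mem_and_mem_iff hne).1 ⟨ha.2, hb.2⟩
      have hadj : (G ⊔ F).Adj a b := by
        have := H.edges_subset_edgeSet he
        rw [hee, SimpleGraph.mem_edgeSet] at this
        exact this
      exact hAnoadj a ha.1 b hb.1 hadj
    have hinc : ∀ v : Fin n, H.edges.countP (fun e => decide (v ∈ e)) = 2 :=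
      fun v => ham_incidence hH v
    have hlen : H.edges.length = n := by
      rw [SimpleGraph.Walk.length_edges, hH.length_eq, Fintype.card_fin]
    have hnr : n / r = 2 * t := by
      rw [← hnt]
      have h2 : 2 * r * t = 2 * t * r := by ring
      rw [h2, Nat.mul_div_cancel _ hr0]
    rw [← List.countP_eq_length_filter, hnr]
    -- χ e = c iff q e = c.val
    have hχval : ∀ e : Sym2 (Fin n), ((⟨q e, hqlt e⟩ : Fin r) = c) ↔ q e = c.val := by
      intro e; rw [Fin.ext_iff]
    have hc2 : c.val < r - 1 ∨ c.val = r - 1 := by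
      have := c.isLt; omega
    rcases hc2 with hc2 | hc2
    · -- small colours
      set Ac : Finset (Fin n) := A.filter (fun a => g a = c.val) with hAc
      have key : ∀ e ∈ H.edges,
          (if decide ((⟨q e, hqlt e⟩ : Fin r) = c) then 1 else 0)
            = ∑ a ∈ Ac, (if decide (a ∈ e) then 1 else 0) := by
        intro e he
        have hrhs : (∑ a ∈ Ac, if decide (a ∈ e) then 1 else 0)
            = (Ac.filter (fun a => a ∈ e)).card := by
          rw [Finset.card_filter]
          exact Finset.sum_congr rfl (fun a _ => by simp)
        rw [hrhs]
        by_cases h : (A.filter (fun a => a ∈ e)).Nonempty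
        · have ha0 := Finset.min'_mem _ h
          rw [Finset.mem_filter] at ha0
          have hqe : q e = g ((A.filter (fun a => a ∈ e)).min' h) := by
            rw [hq]; exact dif_pos h
          set a0 := (A.filter (fun a => a ∈ e)).min' h with ha0def
          by_cases hgc : g a0 = c.val
          · have hmem : ∀ b, b ∈ Ac.filter (fun a => a ∈ e) ↔ b = a0 := by
              intro b
              rw [Finset.mem_filter, hAc, Finset.mem_filter]
              constructor
              · rintro ⟨⟨hbA, _⟩, hbe⟩
                exact Finset.card_le_one.1 (hle1 e he) b
                  (Finset.mem_filter.2 ⟨hbA, hbe⟩)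
                  a0 (Finset.mem_filter.2 ⟨ha0.1, ha0.2⟩)
              · rintro rfl
                exact ⟨⟨ha0.1, hgc⟩, ha0.2⟩
            have : Ac.filter (fun a => a ∈ e) = {a0} := by
              ext b; rw [hmem]; simp
            rw [this, Finset.card_singleton, if_pos]
            rw [decide_eq_true_eq, hχval, hqe, hgc]
          · have : Ac.filter (fun a => a ∈ e) = ∅ := by
              rw [Finset.filter_eq_empty_iff]
              rintro b hb hbe
              rw [hAc, Finset.mem_filter] at hb
              have hba : b = a0 := Finset.card_le_one.1 (hle1 e he) b
                (Finset.mem_filter.2 ⟨hb.1, hbe⟩) a0 (Finset.mem_filter.2 ⟨ha0.1, ha0.2⟩)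
              rw [hba] at hb
              exact hgc hb.2
            rw [this, Finset.card_empty, if_neg]
            rw [decide_eq_true_eq, hχval, hqe]
            exact hgc
        · have hqe : q e = r - 1 := by rw [hq]; exact dif_neg h
          have hempty : Ac.filter (fun a => a ∈ e) = ∅ := by
            rw [Finset.filter_eq_empty_iff]
            rintro b hb hbe
            rw [hAc, Finset.mem_filter] at hb
            exact h ⟨b, Finset.mem_filter.2 ⟨hb.1, hbe⟩⟩
          rw [hempty, Finset.card_empty, if_neg]
          rw [decide_eq_true_eq, hχval, hqe]
          omega
      rw [countP_eq_sum_aux H.edges _ Ac _ key]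
      have hsum : ∑ a ∈ Ac, H.edges.countP (fun e => decide (a ∈ e)) = ∑ _a ∈ Ac, 2 :=
        Finset.sum_congr rfl (fun a _ => hinc a)
      rw [hsum, Finset.sum_const, smul_eq_mul]
      have hAc_card : Ac.card = t := by
        have h1 : Ac.card
            = ((Finset.univ : Finset (Fin ((r - 1) * t))).filter
                (fun j => j.val / t = c.val)).card := by
          apply Finset.card_bij (i := fun a ha => eqv ⟨a, (Finset.mem_filter.1 ha).1⟩)
          · intro a ha
            rw [Finset.mem_filter]
            refine ⟨Finset.mem_univ _, ?_⟩
            have := (Finset.mem_filter.1 ha).2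
            rw [hgA a (Finset.mem_filter.1 ha).1] at this
            exact this
          · intro a1 ha1 a2 ha2 heq
            have := eqv.injective heq
            exact congrArg Subtype.val this
          · intro j hj
            rw [Finset.mem_filter] at hj
            refine ⟨(eqv.symm j).1, ?_, ?_⟩
            · rw [Finset.mem_filter]
              refine ⟨(eqv.symm j).2, ?_⟩
              rw [hgA _ (eqv.symm j).2]
              have : (⟨(eqv.symm j).1, (eqv.symm j).2⟩ : (A : Finset (Fin n))) = eqv.symm j := rfl
              rw [this, Equiv.apply_symm_apply]
              exact hj.2
            · have : (⟨(eqv.symm j).1, (eqv.symm j).2⟩ : (A : Finset (Fin n))) = eqv.symm j := rfl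
              rw [this, Equiv.apply_symm_apply]
        rw [h1]
        apply card_filter_div _ _ _ ht
        exact Nat.mul_le_mul_right t (by omega)
      rw [hAc_card]
      ring
    · -- the last colour
      have key2 : ∀ e ∈ H.edges,
          (if !(decide ((⟨q e, hqlt e⟩ : Fin r) = c)) then 1 else 0)
            = ∑ a ∈ A, (if decide (a ∈ e) then 1 else 0) := by
        intro e he
        have hrhs : (∑ a ∈ A, if decide (a ∈ e) then 1 else 0)
            = (A.filter (fun a => a ∈ e)).card := by
          rw [Finset.card_filter]
          exact Finset.sum_congr rfl (fun a _ => by simp)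
        rw [hrhs]
        by_cases h : (A.filter (fun a => a ∈ e)).Nonempty
        · have ha0 := Finset.min'_mem _ h
          rw [Finset.mem_filter] at ha0
          have hqe : q e = g ((A.filter (fun a => a ∈ e)).min' h) := by
            rw [hq]; exact dif_pos h
          have hne : ¬ ((⟨q e, hqlt e⟩ : Fin r) = c) := by
            rw [hχval, hqe]
            have := hgAlt _ ha0.1
            omega
          have hcard1 : (A.filter (fun a => a ∈ e)).card = 1 :=
            le_antisymm (hle1 e he) (Finset.card_pos.2 h)
          rw [hcard1, if_pos]
          simp [hne]
        · have hqe : q e = r - 1 := by rw [hq]; exact dif_neg h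
          have heq : (⟨q e, hqlt e⟩ : Fin r) = c := by
            rw [hχval, hqe, hc2]
          rw [Finset.not_nonempty_iff_eq_empty.1 h, Finset.card_empty, if_neg]
          simp [heq]
      have hcount2 := countP_eq_sum_aux H.edges _ A _ key2
      have hsum : ∑ a ∈ A, H.edges.countP (fun e => decide (a ∈ e)) = ∑ _a ∈ A, 2 :=
        Finset.sum_congr rfl (fun a _ => hinc a)
      rw [hsum, Finset.sum_const, smul_eq_mul, hAcard] at hcount2
      have hsplit := countP_not_aux H.edges (fun e => decide ((⟨q e, hqlt e⟩ : Fin r) = c))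
      rw [hcount2, hlen] at hsplit
      -- arithmetic: countP + (r-1)*t*2 = 2*r*t  ⟹  countP = 2*t
      obtain ⟨r', rfl⟩ : ∃ r', r = r' + 1 := ⟨r - 1, by omega⟩
      have hQ : (r' + 1 - 1) * t * 2 = 2 * (r' * t) := by
        simp only [Nat.add_sub_cancel]; ring
      have hn' : n = 2 * (r' * t) + 2 * t := by rw [← hnt]; ring
      rw [hQ] at hsplit
      conv at hsplit => rhs; rw [hn']
      rw [Nat.add_comm (2 * (r' * t)) (2 * t)] at hsplit
      exact Nat.add_right_cancel hsplit
end

section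
/- Let r ≥ 2 and let n be a positive integer divisible by 2r. If G is a graph on n vertices whose independence number satisfies α(G) ≥ (r−1)n/(2r), then there exists an r-colouring χ of E(G) such that every Hamilton cycle of G contains exactly n/r edges of each of the r colours. -/
open SimpleGraph
open scoped Classical

private lemma walk_countP_mem {n : ℕ} {G : SimpleGraph (Fin n)} {x y : Fin n} (p : G.Walk x y)
    (v : Fin n) :
    p.edges.countP (fun e => decide (v ∈ e)) =
      p.support.dropLast.count v + p.support.tail.count v := by
  induction p with
  | nil => simp
  | @cons a b c h q ih =>
    rw [Walk.edges_cons, Walk.support_cons, List.countP_cons]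
    obtain ⟨t, ht⟩ : ∃ t, q.support = b :: t := ⟨q.support.tail, q.support_eq_cons⟩
    rw [ht] at ih ⊢
    rw [ih]
    have hab : a ≠ b := h.ne
    simp only [List.dropLast_cons₂, List.count_cons, List.tail_cons, Sym2.mem_iff,
      decide_eq_true_eq]
    simp only [beq_iff_eq]
    split_ifs <;> simp_all <;> omega

private lemma ham_countP_mem {n : ℕ} {G : SimpleGraph (Fin n)} {a : Fin n} {H : G.Walk a a}
    (hH : H.IsHamiltonianCycle) (v : Fin n) :
    H.edges.countP (fun e => decide (v ∈ e)) = 2 := by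
  rw [walk_countP_mem]
  have h1 : H.support.tail.count v = 1 := by
    have h := hH.isHamiltonian_tail v
    rwa [Walk.support_tail_of_not_nil _ hH.isCycle.not_nil] at h
  have hne : H.support ≠ [] := H.support_ne_nil
  have hsplit := List.dropLast_append_getLast hne
  have hlast : H.support.getLast hne = a := H.getLast_support
  have h2 : H.support.dropLast.count v = 1 := by
    by_cases hva : v = a
    · subst hva
      have hc : H.support.count v = 2 := hH.count_support_self
      rw [← hsplit, List.count_append, hlast] at hc
      have h0 : List.count v [v] = 1 := by simp
      omega
    · have hc : H.support.count v = 1 := hH.support_count_of_ne (Ne.symm hva)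
      rw [← hsplit, List.count_append, hlast] at hc
      have h0 : List.count v [a] = 0 := List.count_eq_zero_of_not_mem (by simp [hva])
      omega
  omega

private lemma countP_eq_sum {β γ : Type*} [DecidableEq γ] [Fintype γ] (l : List β)
    (Q : β → Prop) [DecidablePred Q] (P : γ → β → Prop) [∀ v, DecidablePred (P v)]
    (h : ∀ x ∈ l, (if Q x then 1 else 0) = ∑ v : γ, if P v x then 1 else 0) :
    l.countP (fun x => decide (Q x)) = ∑ v : γ, l.countP (fun x => decide (P v x)) := by
  induction l with
  | nil => simp
  | cons a l ih =>
    simp only [List.countP_cons, decide_eq_true_eq]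
    rw [ih (fun x hx => h x (List.mem_cons_of_mem _ hx)), Finset.sum_add_distrib,
      ← h a List.mem_cons_self]

private lemma length_eq_sum_countP {β γ : Type*} [Fintype γ] [DecidableEq γ] (l : List β)
    (f : β → γ) :
    l.length = ∑ c : γ, l.countP (fun x => decide (f x = c)) := by
  induction l with
  | nil => simp
  | cons a l ih =>
    simp only [List.countP_cons, List.length_cons, Finset.sum_add_distrib, ← ih,
      decide_eq_true_eq]
    have : (∑ c : γ, if f a = c then 1 else 0) = 1 := by simp
    omega

private lemma card_div_filter (m k N : ℕ) (hm : 0 < m) (hk : k < N) :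
    ((Finset.range (N * m)).filter (fun j => j / m = k)).card = m := by
  have himg : (Finset.range (N * m)).filter (fun j => j / m = k)
      = (Finset.range m).image (fun i => m * k + i) := by
    ext j
    simp only [Finset.mem_filter, Finset.mem_range, Finset.mem_image]
    constructor
    · rintro ⟨hj, hdiv⟩
      have h1 : m * k + j % m = j := by rw [← hdiv]; exact Nat.div_add_mod j m
      exact ⟨j % m, Nat.mod_lt _ hm, h1⟩
    · rintro ⟨i, hi, rfl⟩
      have hdiv : (m * k + i) / m = k := by
        rw [Nat.mul_add_div hm, Nat.div_eq_of_lt hi]; omega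
      have hle : m * (k + 1) ≤ m * N := Nat.mul_le_mul_left _ hk
      have h2 : m * N = N * m := Nat.mul_comm _ _
      have h3 : m * (k + 1) = m * k + m := by ring
      exact ⟨by omega, hdiv⟩
  rw [himg, Finset.card_image_of_injective _ (add_right_injective _), Finset.card_range]

/-- Let `r ≥ 2` and let `n > 0` be divisible by `2r`. If a graph `G` on
`n` vertices has an independent set of size at least `(r-1)n/(2r)`, then there is an
`r`-colouring of its edges such that every Hamilton cycle of `G` contains exactly `n/r`
edges of each colour. -/
theorem stmt_2 (r n : ℕ) (hr : 2 ≤ r) (hn : 0 < n) (hdvd : 2 * r ∣ n)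
    (G : SimpleGraph (Fin n))
    (hind : ∃ S : Finset (Fin n),
      (∀ u ∈ S, ∀ v ∈ S, ¬ G.Adj u v) ∧ ((r : ℝ) - 1) * n / (2 * r) ≤ (S.card : ℝ)) :
    ∃ χ : Sym2 (Fin n) → Fin r,
      ∀ (u : Fin n) (H : G.Walk u u), H.IsHamiltonianCycle →
        ∀ c : Fin r, (H.edges.filter fun e => decide (χ e = c)).length = n / r := by
  obtain ⟨S, hSind, hScard⟩ := hind
  obtain ⟨m, hm⟩ := hdvd
  have hm0 : 0 < m := by
    rcases Nat.eq_zero_or_pos m with h | h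
    · subst h; simp at hm; omega
    · exact h
  have hrpos : 0 < r := by omega
  -- the independent set has at least (r-1)*m elements
  have hcard : (r - 1) * m ≤ S.card := by
    have hr0 : (r : ℝ) ≠ 0 := by positivity
    have h1 : (((r - 1) * m : ℕ) : ℝ) ≤ (S.card : ℝ) := by
      rw [Nat.cast_mul, Nat.cast_sub (by omega : 1 ≤ r)]
      refine le_trans (le_of_eq ?_) hScard
      rw [hm]; push_cast; field_simp
    exact_mod_cast h1
  obtain ⟨S', hS'sub, hS'card⟩ := Finset.exists_subset_card_eq hcard
  have hS'ind : ∀ u ∈ S', ∀ v ∈ S', ¬ G.Adj u v :=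
    fun u hu v hv => hSind u (hS'sub hu) v (hS'sub hv)
  let eqv := S'.equivFin
  have hdivlt : ∀ (j : Fin S'.card), (j : ℕ) / m < r - 1 := by
    intro j
    have hx : (j : ℕ) < (r - 1) * m := by rw [← hS'card]; exact j.isLt
    exact (Nat.div_lt_iff_lt_mul hm0).2 hx
  let pf : Fin n → Fin r := fun v =>
    if h : v ∈ S' then ⟨(eqv ⟨v, h⟩ : ℕ) / m, by have := hdivlt (eqv ⟨v, h⟩); omega⟩
    else ⟨r - 1, by omega⟩
  let last : Fin r := ⟨r - 1, by omega⟩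
  have hpf_le : ∀ v, pf v ≤ last := by
    intro v
    rw [Fin.le_def]
    simp only [pf, last]
    split
    · next h => exact le_of_lt (hdivlt (eqv ⟨v, h⟩))
    · exact le_refl _
  have hpf_not : ∀ v, v ∉ S' → pf v = last := by
    intro v h; simp [pf, h, last]
  have hpf_mem : ∀ v, pf v ≠ last → v ∈ S' := by
    intro v h
    by_contra hv
    exact h (hpf_not v hv)
  refine ⟨Sym2.lift ⟨fun u v => min (pf u) (pf v), fun u v => min_comm _ _⟩, ?_⟩
  intro u H hH c
  set χ : Sym2 (Fin n) → Fin r :=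
    Sym2.lift ⟨fun u v => min (pf u) (pf v), fun u v => min_comm _ _⟩ with hχ
  rw [← List.countP_eq_length_filter]
  have hnr : n / r = 2 * m := by
    rw [hm, show 2 * r * m = r * (2 * m) by ring, Nat.mul_div_cancel_left _ hrpos]
  -- count for a non-last colour
  have hcnt : ∀ c : Fin r, c ≠ last →
      H.edges.countP (fun e => decide (χ e = c)) = 2 * m := by
    intro c hc
    have hclt : (c : ℕ) < r - 1 := by
      have := c.isLt
      have : (c : ℕ) ≠ r - 1 := fun h => hc (Fin.ext h)
      omega
    have hclast : c ≠ last := hc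
    -- pointwise decomposition over vertices
    have hpoint : ∀ e ∈ H.edges,
        (if χ e = c then 1 else 0) = ∑ v : Fin n, if pf v = c ∧ v ∈ e then 1 else 0 := by
      intro e he
      have hedge : e ∈ G.edgeSet := H.edges_subset_edgeSet he
      induction e with
      | h x y =>
        have hadj : G.Adj x y := hedge
        have hxy : x ≠ y := hadj.ne
        have hnot : ¬ (x ∈ S' ∧ y ∈ S') := fun ⟨h1, h2⟩ => hS'ind x h1 y h2 hadj
        have hsum : (∑ v : Fin n, if pf v = c ∧ v ∈ (s(x, y) : Sym2 (Fin n)) then 1 else 0)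
            = (if pf x = c then 1 else 0) + (if pf y = c then 1 else 0) := by
          have hstep : ∀ v : Fin n,
              (if pf v = c ∧ v ∈ (s(x, y) : Sym2 (Fin n)) then 1 else 0)
              = (if v = x then (if pf x = c then 1 else 0) else 0)
                + (if v = y then (if pf y = c then 1 else 0) else 0) := by
            intro v
            by_cases hvx : v = x <;> by_cases hvy : v = y <;>
              simp [hvx, hvy, Sym2.mem_iff, hxy] at * <;> simp_all
          rw [Finset.sum_congr rfl (fun v _ => hstep v), Finset.sum_add_distrib]
          simp
        rw [hsum]
        have hχxy : χ s(x, y) = min (pf x) (pf y) := by rw [hχ]; rfl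
        have hlastc : last ≠ c := fun h => hclast h.symm
        rcases not_and_or.mp hnot with hx | hy
        · rw [hχxy, hpf_not x hx, min_eq_right (hpf_le y)]
          simp [hpf_not x hx, hlastc]
        · rw [hχxy, hpf_not y hy, min_eq_left (hpf_le x)]
          simp [hlastc]
    rw [countP_eq_sum H.edges (fun e => χ e = c) (fun v e => pf v = c ∧ v ∈ e) hpoint]
    have hterm : ∀ v : Fin n,
        H.edges.countP (fun e => decide (pf v = c ∧ v ∈ e))
        = if pf v = c then 2 else 0 := by
      intro v
      by_cases hv : pf v = c
      · rw [if_pos hv, ← ham_countP_mem hH v]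
        apply List.countP_congr
        intro e _
        simp [hv]
      · rw [if_neg hv]
        apply List.countP_eq_zero.mpr
        intro e _
        simp [hv]
    rw [Finset.sum_congr rfl (fun v _ => hterm v), ← Finset.sum_filter, Finset.sum_const,
      smul_eq_mul]
    -- the block has exactly m vertices
    have hcardblock :
        (Finset.univ.filter (fun v : Fin n => pf v = c)).card
          = ((Finset.range ((r - 1) * m)).filter (fun j => j / m = (c : ℕ))).card := by
      apply Finset.card_nbij' (i := fun v => if h : v ∈ S' then ((eqv ⟨v, h⟩ : Fin S'.card) : ℕ) else 0)
        (j := fun k => if h : k < S'.card then ((eqv.symm ⟨k, h⟩ : {x // x ∈ S'}) : Fin n) else ⟨0, hn⟩)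
      · intro v hv
        simp only [Finset.mem_coe, Finset.mem_filter, Finset.mem_univ, true_and] at hv
        have hvS : v ∈ S' := hpf_mem v (by rw [hv]; exact hclast)
        simp only [dif_pos hvS, Finset.mem_coe, Finset.mem_filter, Finset.mem_range]
        have hlt : ((eqv ⟨v, hvS⟩ : Fin S'.card) : ℕ) < (r - 1) * m := by
          rw [← hS'card]; exact (eqv ⟨v, hvS⟩).isLt
        refine ⟨hlt, ?_⟩
        have : pf v = ⟨(eqv ⟨v, hvS⟩ : ℕ) / m, by have := hdivlt (eqv ⟨v, hvS⟩); omega⟩ := by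
          simp [pf, hvS]
        rw [this] at hv
        exact congrArg Fin.val hv
      · intro k hk
        simp only [Finset.mem_coe, Finset.mem_filter, Finset.mem_range] at hk
        have hklt : k < S'.card := by rw [hS'card]; exact hk.1
        simp only [dif_pos hklt, Finset.mem_coe, Finset.mem_filter, Finset.mem_univ, true_and]
        have hmem : ((eqv.symm ⟨k, hklt⟩ : {x // x ∈ S'}) : Fin n) ∈ S' :=
          (eqv.symm ⟨k, hklt⟩).2
        have heq : eqv ⟨((eqv.symm ⟨k, hklt⟩ : {x // x ∈ S'}) : Fin n), hmem⟩ = ⟨k, hklt⟩ := by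
          rw [show (⟨((eqv.symm ⟨k, hklt⟩ : {x // x ∈ S'}) : Fin n), hmem⟩ : {x // x ∈ S'})
            = eqv.symm ⟨k, hklt⟩ from Subtype.ext rfl]
          exact eqv.apply_symm_apply _
        apply Fin.ext
        simp only [pf, dif_pos hmem, heq]
        exact hk.2
      · intro v hv
        simp only [Finset.mem_coe, Finset.mem_filter, Finset.mem_univ, true_and] at hv
        have hvS : v ∈ S' := hpf_mem v (by rw [hv]; exact hclast)
        simp only [dif_pos hvS]
        have hlt := (eqv ⟨v, hvS⟩).isLt
        simp only [dif_pos hlt]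
        have : (⟨((eqv ⟨v, hvS⟩ : Fin S'.card) : ℕ), hlt⟩ : Fin S'.card) = eqv ⟨v, hvS⟩ :=
          Fin.ext rfl
        rw [this, eqv.symm_apply_apply]
      · intro k hk
        simp only [Finset.mem_coe, Finset.mem_filter, Finset.mem_range] at hk
        have hklt : k < S'.card := by rw [hS'card]; exact hk.1
        simp only [dif_pos hklt]
        have hmem : ((eqv.symm ⟨k, hklt⟩ : {x // x ∈ S'}) : Fin n) ∈ S' :=
          (eqv.symm ⟨k, hklt⟩).2
        simp only [dif_pos hmem]
        have heq : eqv ⟨((eqv.symm ⟨k, hklt⟩ : {x // x ∈ S'}) : Fin n), hmem⟩ = ⟨k, hklt⟩ := by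
          rw [show (⟨((eqv.symm ⟨k, hklt⟩ : {x // x ∈ S'}) : Fin n), hmem⟩ : {x // x ∈ S'})
            = eqv.symm ⟨k, hklt⟩ from Subtype.ext rfl]
          exact eqv.apply_symm_apply _
        rw [heq]
    rw [hcardblock, card_div_filter m (c : ℕ) (r - 1) hm0 hclt]
    omega
  by_cases hc : c = last
  · -- last colour: by total count
    subst hc
    have htotal : H.edges.length = n := by
      rw [H.length_edges, hH.length_eq, Fintype.card_fin]
    have hsum := length_eq_sum_countP H.edges χ
    rw [htotal] at hsum
    rw [← Finset.add_sum_erase _ _ (Finset.mem_univ last)] at hsum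
    have herase : ∀ c ∈ Finset.univ.erase last,
        H.edges.countP (fun x => decide (χ x = c)) = 2 * m := by
      intro c hcmem
      exact hcnt c (Finset.ne_of_mem_erase hcmem)
    rw [Finset.sum_congr rfl herase, Finset.sum_const, smul_eq_mul,
      Finset.card_erase_of_mem (Finset.mem_univ _), Finset.card_univ, Fintype.card_fin] at hsum
    obtain ⟨r', rfl⟩ : ∃ r', r = r' + 1 := ⟨r - 1, by omega⟩
    have hs1 : (r' + 1 - 1) * (2 * m) = 2 * (r' * m) := by
      rw [show r' + 1 - 1 = r' from rfl]; ring
    have hn2 : n = 2 * (r' * m) + 2 * m := by rw [hm]; ring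
    rw [hs1] at hsum
    rw [hnr]
    set K := r' * m with hK
    omega
  · rw [hcnt c hc, hnr]
end

section
/- Let r ≥ 2 be an integer, let 0 < α ≤ (r+1)/(2r), and let m be an integer with 0 ≤ m < n/r. For all sufficiently large n divisible by 2r there exists a graph G on n vertices with minimum degree δ(G) ≥ αn such that the following holds: for every graph F on the same vertex set as G with exactly m edges, there exists an r-colouring of the edges of G ∪ F such that every Hamilton cycle of G ∪ F contains, for each colour c, at most n/r + 2(r−1)m edges of colour c. -/
open SimpleGraph
open scoped Classical

section AuxLemmas

lemma aux_exists_edge {V : Type*} {G : SimpleGraph V} {a b v : V} (p : G.Walk a b)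
    (hv : v ∈ p.support) (hvb : v ≠ b) : ∃ e ∈ p.edges, v ∈ e := by
  induction p with
  | nil => simp only [SimpleGraph.Walk.support_nil, List.mem_singleton] at hv; exact absurd hv hvb
  | @cons x y z hadj q ih =>
    simp only [SimpleGraph.Walk.support_cons, List.mem_cons] at hv
    rcases hv with rfl | hv
    · refine ⟨s(v, y), ?_, Sym2.mem_mk_left _ _⟩
      simp [SimpleGraph.Walk.edges_cons]
    · obtain ⟨e, he, hve⟩ := ih hv hvb
      refine ⟨e, ?_, hve⟩
      simp [SimpleGraph.Walk.edges_cons, he]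

lemma aux_exists_edge_closed {V : Type*} {G : SimpleGraph V} {a v : V} (p : G.Walk a a)
    (hnil : ¬p.Nil) (hv : v ∈ p.support) : ∃ e ∈ p.edges, v ∈ e := by
  by_cases hva : v = a
  · subst hva
    obtain ⟨u, h, q, rfl⟩ := SimpleGraph.Walk.not_nil_iff.mp hnil
    refine ⟨s(v, u), ?_, Sym2.mem_mk_left _ _⟩
    simp [SimpleGraph.Walk.edges_cons]
  · exact aux_exists_edge p hv hva

lemma aux_card_mem_sym2 {V : Type*} [DecidableEq V] [Fintype V] (e : Sym2 V) (hd : ¬ e.IsDiag) :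
    (Finset.univ.filter (fun v => v ∈ e)).card = 2 := by
  induction e with
  | _ a b =>
    have hab : a ≠ b := by simpa [Sym2.isDiag_iff_proj_eq] using hd
    have : (Finset.univ.filter (fun v => v ∈ s(a, b))) = {a, b} := by
      ext x; simp [Sym2.mem_iff]
    rw [this, Finset.card_insert_of_notMem (by simpa using hab), Finset.card_singleton]

lemma aux_countP_card {V : Type*} [DecidableEq V] {l : List (Sym2 V)} (hl : l.Nodup)
    (q : Sym2 V → Prop) [DecidablePred q] :
    (l.toFinset.filter (fun e => q e)).card = (l.filter (fun e => decide (q e))).length := by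
  rw [show (l.toFinset.filter (fun e => q e)) = (l.filter (fun e => decide (q e))).toFinset by
        rw [List.toFinset_filter]; apply Finset.filter_congr; intro x _; simp]
  rw [List.toFinset_card_of_nodup (hl.filter _)]

/-- In a Hamiltonian cycle, each vertex lies in exactly two of the edges. -/
lemma aux_two_edges {V : Type*} [DecidableEq V] [Fintype V] {G : SimpleGraph V}
    {a : V} {p : G.Walk a a} (hp : p.IsHamiltonianCycle) (v : V) :
    (p.edges.toFinset.filter (fun e => v ∈ e)).card = 2 := by
  classical
  have htrail : p.IsTrail := hp.isCycle.isCircuit.isTrail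
  have hnodup : p.edges.Nodup := htrail.edges_nodup
  have hge : ∀ w : V, 2 ≤ (p.edges.toFinset.filter (fun e => w ∈ e)).card := by
    intro w
    have hcard : (p.edges.toFinset.filter (fun e => w ∈ e)).card
        = p.edges.countP (fun e => decide (w ∈ e)) := by
      rw [aux_countP_card hnodup (fun e => w ∈ e), ← List.countP_eq_length_filter]
    have heven : Even ((p.edges.toFinset.filter (fun e => w ∈ e)).card) := by
      rw [hcard]
      simpa using (htrail.even_countP_edges_iff w).mpr (by simp)
    have hpos : 0 < (p.edges.toFinset.filter (fun e => w ∈ e)).card := by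
      obtain ⟨e, he, hwe⟩ := aux_exists_edge_closed p hp.isCycle.not_nil (hp.mem_support w)
      exact Finset.card_pos.mpr ⟨e, by simp [List.mem_toFinset.mpr he, hwe]⟩
    rcases heven with ⟨t, ht⟩
    omega
  have hsum : ∑ w : V, (p.edges.toFinset.filter (fun e => w ∈ e)).card
      = 2 * Fintype.card V := by
    have hswap : ∑ w : V, (p.edges.toFinset.filter (fun e => w ∈ e)).card
        = ∑ e ∈ p.edges.toFinset, (Finset.univ.filter (fun w => w ∈ e)).card := by
      simp only [Finset.card_filter]
      rw [Finset.sum_comm]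
    rw [hswap]
    have hEcard : p.edges.toFinset.card = Fintype.card V := by
      rw [List.toFinset_card_of_nodup hnodup, SimpleGraph.Walk.length_edges, hp.length_eq]
    calc ∑ e ∈ p.edges.toFinset, (Finset.univ.filter (fun w => w ∈ e)).card
        = ∑ _e ∈ p.edges.toFinset, 2 := by
          apply Finset.sum_congr rfl
          intro e he
          exact aux_card_mem_sym2 e
            (SimpleGraph.not_isDiag_of_mem_edgeSet G
              (p.edges_subset_edgeSet (List.mem_toFinset.mp he)))
      _ = 2 * Fintype.card V := by rw [Finset.sum_const, hEcard]; ring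
  by_contra hne
  have h3 : 3 ≤ (p.edges.toFinset.filter (fun e => v ∈ e)).card := by
    have := hge v; omega
  have hv : v ∈ (Finset.univ : Finset V) := Finset.mem_univ v
  have hsplit : (p.edges.toFinset.filter (fun e => v ∈ e)).card
      + ∑ w ∈ Finset.univ.erase v, (p.edges.toFinset.filter (fun e => w ∈ e)).card
      = 2 * Fintype.card V := by
    rw [← hsum]
    exact Finset.add_sum_erase _ (fun w => (p.edges.toFinset.filter (fun e => w ∈ e)).card) hv
  have h2 : ∑ w ∈ Finset.univ.erase v, 2
      ≤ ∑ w ∈ Finset.univ.erase v, (p.edges.toFinset.filter (fun e => w ∈ e)).card :=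
    Finset.sum_le_sum (fun w _ => hge w)
  have hconst : ∑ _w ∈ Finset.univ.erase v, 2 = 2 * (Fintype.card V - 1) := by
    rw [Finset.sum_const, Finset.card_erase_of_mem hv, Finset.card_univ, smul_eq_mul, mul_comm]
  have hVpos : 1 ≤ Fintype.card V := Fintype.card_pos_iff.mpr ⟨v⟩
  omega

lemma aux_card_fin_interval (n a b : ℕ) (hb : b ≤ n) :
    (Finset.univ.filter (fun v : Fin n => a ≤ v.val ∧ v.val < b)).card = b - a := by
  rcases le_or_gt a b with hab | hab
  · rw [← Nat.card_Ico a b]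
    refine Finset.card_bij' (fun v _ => (v.val : ℕ))
      (fun x hx => (⟨x, lt_of_lt_of_le (Finset.mem_Ico.mp hx).2 hb⟩ : Fin n)) ?_ ?_ ?_ ?_
    · intro v hv; simp only [Finset.mem_filter] at hv; exact Finset.mem_Ico.mpr hv.2
    · intro x hx; simp only [Finset.mem_filter]
      exact ⟨Finset.mem_univ _, (Finset.mem_Ico.mp hx).1, (Finset.mem_Ico.mp hx).2⟩
    · intro v hv; rfl
    · intro x hx; rfl
  · rw [Nat.sub_eq_zero_of_le hab.le]
    rw [Finset.card_eq_zero, Finset.filter_eq_empty_iff]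
    intro v _; omega

lemma aux_card_fin_ge (n a : ℕ) :
    (Finset.univ.filter (fun v : Fin n => a ≤ v.val)).card = n - a := by
  rw [← aux_card_fin_interval n a n le_rfl]
  congr 1
  apply Finset.filter_congr
  intro v _
  simp [v.isLt]

end AuxLemmas

/-- Let `r ≥ 2` and `0 < α ≤ (r+1)/(2r)`. For all sufficiently large `n`
divisible by `2r` and every integer `0 ≤ m < n/r`, there is a graph `G` on `n` vertices
with minimum degree at least `α n` such that for every graph `F` on the same vertex set
with exactly `m` edges, some `r`-colouring of `G ⊔ F` makes every Hamilton cycle of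
`G ⊔ F` contain at most `n/r + 2(r-1)m` edges of each colour. -/
theorem stmt_3 (r : ℕ) (hr : 2 ≤ r) (α : ℝ) (hα : 0 < α) (hα' : α ≤ (r + 1) / (2 * r)) :
    ∃ N : ℕ, ∀ n ≥ N, 2 * r ∣ n →
      ∀ m : ℕ, (m : ℝ) < (n : ℝ) / r →
        ∃ G : SimpleGraph (Fin n),
          (∀ v : Fin n, α * n ≤ ((G.neighborSet v).ncard : ℝ)) ∧
          ∀ F : SimpleGraph (Fin n), F.edgeSet.ncard = m →
            ∃ χ : Sym2 (Fin n) → Fin r,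
              ∀ (u : Fin n) (H : (G ⊔ F).Walk u u), H.IsHamiltonianCycle →
                ∀ c : Fin r,
                  ((H.edges.filter fun e => decide (χ e = c)).length : ℝ)
                    ≤ (n : ℝ) / r + 2 * ((r : ℝ) - 1) * m := by
  classical
  have hrpos : 0 < r := by omega
  have hrR : (0 : ℝ) < (r : ℝ) := by exact_mod_cast hrpos
  refine ⟨2 * r, ?_⟩
  intro n hn hdvd m hm
  obtain ⟨k, hk⟩ := hdvd
  have hkpos : 0 < k := by
    rcases Nat.eq_zero_or_pos k with h | h
    · rw [h, Nat.mul_zero] at hk; omega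
    · exact h
  -- the vertex-labelling map
  have hlastlt : r - 1 < r := by omega
  set last : Fin r := ⟨r - 1, hlastlt⟩ with hlastdef
  have hιaux : ∀ v : Fin n, (v : ℕ) < (r-1)*k → v.val / k < r := by
    intro v hv
    have := (Nat.div_lt_iff_lt_mul hkpos).mpr hv
    omega
  set ι : Fin n → Fin r := fun v =>
    if h : (v : ℕ) < (r-1)*k then ⟨v.val / k, hιaux v h⟩ else last with hιdef
  have hι_last : ∀ v : Fin n, (ι v = last ↔ (r-1)*k ≤ (v : ℕ)) := by
    intro v
    by_cases h : (v : ℕ) < (r-1)*k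
    · have hdiv : v.val / k < r - 1 := (Nat.div_lt_iff_lt_mul hkpos).mpr h
      simp only [hιdef, dif_pos h]
      constructor
      · intro heq
        exfalso
        have := congrArg Fin.val heq
        simp [hlastdef] at this
        omega
      · intro hle; omega
    · simp only [hιdef, dif_neg h]
      constructor
      · intro _; omega
      · intro _; trivial
  have hι_le : ∀ v : Fin n, (ι v : ℕ) ≤ r - 1 := by
    intro v
    by_cases h : (v : ℕ) < (r-1)*k
    · simp only [hιdef, dif_pos h]
      have := (Nat.div_lt_iff_lt_mul hkpos).mpr h
      omega
    · simp only [hιdef, dif_neg h, hlastdef]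
      omega
  have hι_small : ∀ (v : Fin n) (c : Fin r), (c : ℕ) < r - 1 →
      (ι v = c ↔ ((c : ℕ)*k ≤ v.val ∧ v.val < (c : ℕ)*k + k)) := by
    intro v c hc
    by_cases h : (v : ℕ) < (r-1)*k
    · simp only [hιdef, dif_pos h]
      rw [Fin.ext_iff]
      simp only
      have h1 : (c : ℕ) ≤ v.val / k ↔ (c : ℕ) * k ≤ v.val := Nat.le_div_iff_mul_le hkpos
      have h2 : v.val / k < (c : ℕ) + 1 ↔ v.val < ((c : ℕ) + 1) * k :=
        Nat.div_lt_iff_lt_mul hkpos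
      have h3 : ((c : ℕ) + 1) * k = (c : ℕ) * k + k := by ring
      rw [h3] at h2
      omega
    · simp only [hιdef, dif_neg h]
      constructor
      · intro heq
        exfalso
        have := congrArg Fin.val heq
        simp [hlastdef] at this
        omega
      · intro ⟨h1, h2⟩
        exfalso
        have hck : ((c : ℕ) + 1) * k ≤ (r - 1) * k := Nat.mul_le_mul_right k (by omega)
        have : ((c : ℕ) + 1) * k = (c : ℕ) * k + k := by ring
        omega
  -- the graph
  set G : SimpleGraph (Fin n) := SimpleGraph.fromRel (fun u _v => (r-1)*k ≤ (u : ℕ)) with hGdef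
  have hAdj : ∀ u v : Fin n, G.Adj u v ↔ u ≠ v ∧ ((r-1)*k ≤ (u : ℕ) ∨ (r-1)*k ≤ (v : ℕ)) := by
    intro u v
    simp [hGdef, SimpleGraph.fromRel_adj]
  -- arithmetic facts
  have hmulsplit : 2*r*k = 2*((r-1)*k) + 2*k := by
    have h1 : (r-1) + 1 = r := by omega
    calc 2*r*k = 2*r*k := rfl
    _ = 2*(((r-1)+1)*k) := by rw [h1]; ring
    _ = 2*((r-1)*k) + 2*k := by ring
  have hrk1 : (r+1)*k + ((r-1)*k) = 2*r*k := by
    have h1 : (r-1) + 1 = r := by omega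
    calc (r+1)*k + ((r-1)*k) = (((r-1)+1)+1)*k + ((r-1)*k) := by rw [h1]
    _ = 2*(((r-1)+1)*k) := by ring
    _ = 2*r*k := by rw [h1]; ring
  have hkk : k ≤ (r-1)*k := by
    calc k = 1*k := (one_mul k).symm
    _ ≤ (r-1)*k := Nat.mul_le_mul_right k (by omega)
  have hnrR : (n : ℝ) / r = 2 * k := by
    rw [hk]
    push_cast
    field_simp
  refine ⟨G, ?_, ?_⟩
  · -- degree condition
    intro v
    have hns : (G.neighborSet v) = ↑(Finset.univ.filter (fun u => G.Adj v u)) := by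
      ext u; simp [SimpleGraph.mem_neighborSet]
    rw [hns, Set.ncard_coe_finset]
    have hkey : α * n ≤ (((r+1)*k : ℕ) : ℝ) := by
      have h1 : α * n ≤ (r + 1) / (2 * r) * n := by
        apply mul_le_mul_of_nonneg_right hα' (by positivity)
      have h2 : ((r : ℝ) + 1) / (2 * r) * n = (((r+1)*k : ℕ) : ℝ) := by
        rw [hk]
        push_cast
        field_simp
      linarith
    by_cases hv : (r-1)*k ≤ (v : ℕ)
    · have hfil : Finset.univ.filter (fun u => G.Adj v u)
          = Finset.univ.filter (fun u : Fin n => u ≠ v) := by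
        apply Finset.filter_congr
        intro u _
        simp only [hAdj, eq_iff_iff]
        constructor
        · intro ⟨h1, _⟩; exact h1.symm
        · intro h1; exact ⟨h1.symm, Or.inl hv⟩
      rw [hfil]
      have : Finset.univ.filter (fun u : Fin n => u ≠ v) = Finset.univ.erase v := by
        ext u; simp [Finset.mem_erase]
      rw [this, Finset.card_erase_of_mem (Finset.mem_univ v), Finset.card_univ, Fintype.card_fin]
      have hlt : (r+1)*k < 2*r*k := by
        have h2 : r+1 < 2*r := by omega
        calc (r+1)*k < (2*r)*k := by
              exact Nat.mul_lt_mul_of_lt_of_le h2 le_rfl hkpos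
        _ = 2*r*k := by ring
      have hle : (r+1)*k ≤ n - 1 := by omega
      calc α * n ≤ (((r+1)*k : ℕ) : ℝ) := hkey
      _ ≤ ((n - 1 : ℕ) : ℝ) := by exact_mod_cast hle
    · have hfil : Finset.univ.filter (fun u => G.Adj v u)
          = Finset.univ.filter (fun u : Fin n => (r-1)*k ≤ (u : ℕ)) := by
        apply Finset.filter_congr
        intro u _
        simp only [hAdj, eq_iff_iff]
        constructor
        · intro ⟨h1, h2⟩
          rcases h2 with h2 | h2
          · exact absurd h2 hv
          · exact h2
        · intro h1
          refine ⟨?_, Or.inr h1⟩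
          intro heq
          exact hv (heq ▸ h1)
      rw [hfil, aux_card_fin_ge n ((r-1)*k)]
      have : n - (r-1)*k = (r+1)*k := by omega
      rw [this]
      exact hkey
  · -- colouring condition
    intro F hF
    set χ : Sym2 (Fin n) → Fin r :=
      Sym2.lift ⟨fun a b => min (ι a) (ι b), fun a b => min_comm _ _⟩ with hχdef
    have hχ : ∀ a b : Fin n, χ s(a, b) = min (ι a) (ι b) := fun a b => rfl
    refine ⟨χ, ?_⟩
    intro u H hH c
    have htrail : H.IsTrail := hH.isCycle.isCircuit.isTrail
    have hnodup : H.edges.Nodup := htrail.edges_nodup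
    set E : Finset (Sym2 (Fin n)) := H.edges.toFinset with hEdef
    have hEcard : E.card = n := by
      rw [hEdef, List.toFinset_card_of_nodup hnodup, SimpleGraph.Walk.length_edges,
        hH.length_eq, Fintype.card_fin]
    have htwo : ∀ v : Fin n, (E.filter (fun e => v ∈ e)).card = 2 :=
      fun v => aux_two_edges hH v
    have hnondiag : ∀ e ∈ E, ¬ e.IsDiag := by
      intro e he
      exact SimpleGraph.not_isDiag_of_mem_edgeSet _
        (H.edges_subset_edgeSet (List.mem_toFinset.mp he))
    have hrw : ((H.edges.filter fun e => decide (χ e = c)).length : ℝ)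
        = ((E.filter (fun e => χ e = c)).card : ℝ) := by
      rw [aux_countP_card hnodup (fun e => χ e = c)]
    rw [hrw]
    by_cases hc : c = last
    · -- the big colour
      subst hc
      set S : Finset (Fin n) := Finset.univ.filter (fun v : Fin n => ι v ≠ last) with hSdef
      have hScard : S.card = (r-1)*k := by
        rw [hSdef]
        have : Finset.univ.filter (fun v : Fin n => ι v ≠ last)
            = Finset.univ.filter (fun v : Fin n => 0 ≤ v.val ∧ v.val < (r-1)*k) := by
          apply Finset.filter_congr
          intro v _
          simp only [ne_eq, hι_last v]
          omega
        rw [this, aux_card_fin_interval n 0 ((r-1)*k) (by omega)]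
        omega
      set g : Sym2 (Fin n) → ℕ := fun e => (S.filter (fun v => v ∈ e)).card with hgdef
      have hg2 : ∀ e ∈ E, g e ≤ 2 := by
        intro e he
        calc g e ≤ (Finset.univ.filter (fun v => v ∈ e)).card :=
              Finset.card_le_card (Finset.filter_subset_filter _ (Finset.subset_univ S))
        _ = 2 := aux_card_mem_sym2 e (hnondiag e he)
      have hsumg : ∑ e ∈ E, g e = 2 * ((r-1)*k) := by
        have hswap : ∑ e ∈ E, g e = ∑ v ∈ S, (E.filter (fun e => v ∈ e)).card := by
          simp only [hgdef, Finset.card_filter]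
          rw [Finset.sum_comm]
        rw [hswap]
        calc ∑ v ∈ S, (E.filter (fun e => v ∈ e)).card = ∑ _v ∈ S, 2 :=
              Finset.sum_congr rfl (fun v _ => htwo v)
        _ = 2 * ((r-1)*k) := by rw [Finset.sum_const, hScard]; ring
      -- identify colour-last edges with g = 0 edges
      have hE0 : E.filter (fun e => χ e = last) = E.filter (fun e => g e = 0) := by
        apply Finset.filter_congr
        intro e he
        induction e with
        | _ a b =>
          have hab : a ≠ b := by
            intro heq
            exact hnondiag _ he (by rw [heq]; exact Sym2.isDiag_iff_proj_eq.mpr rfl)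
          have hga : g s(a, b) = 0 ↔ (ι a = last ∧ ι b = last) := by
            rw [hgdef]
            simp only [Finset.card_eq_zero, Finset.filter_eq_empty_iff]
            constructor
            · intro hemp
              constructor
              · by_contra hia
                exact hemp (Finset.mem_filter.mpr ⟨Finset.mem_univ a, hia⟩)
                  (Sym2.mem_mk_left a b)
              · by_contra hib
                exact hemp (Finset.mem_filter.mpr ⟨Finset.mem_univ b, hib⟩)
                  (Sym2.mem_mk_right a b)
            · intro ⟨ha, hb⟩ v hv hve
              rw [hSdef, Finset.mem_filter] at hv
              rcases Sym2.mem_iff.mp hve with rfl | rfl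
              · exact hv.2 ha
              · exact hv.2 hb
          rw [hga, hχ a b]
          constructor
          · intro hmin
            rcases min_eq_iff.mp hmin with ⟨h1, h2⟩ | ⟨h1, h2⟩
            · refine ⟨h1, ?_⟩
              rw [h1] at h2
              have := hι_le b
              have h3 := Fin.le_def.mp h2
              apply Fin.ext
              simp only [hlastdef] at h3 ⊢
              omega
            · refine ⟨?_, h1⟩
              rw [h1] at h2
              have := hι_le a
              have h3 := Fin.le_def.mp h2
              apply Fin.ext
              simp only [hlastdef] at h3 ⊢
              omega
          · intro ⟨h1, h2⟩
            rw [h1, h2, min_self]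
      rw [hE0]
      -- counting
      set A0 : Finset (Sym2 (Fin n)) := E.filter (fun e => g e = 0) with hA0def
      set Ap : Finset (Sym2 (Fin n)) := E.filter (fun e => ¬ g e = 0) with hApdef
      set A2 : Finset (Sym2 (Fin n)) := E.filter (fun e => g e = 2) with hA2def
      have hpart : A0.card + Ap.card = n := by
        rw [hA0def, hApdef, Finset.card_filter_add_card_filter_not, hEcard]
      have hsplitsum : ∑ e ∈ A0, g e + ∑ e ∈ Ap, g e = 2 * ((r-1)*k) := by
        rw [hA0def, hApdef, Finset.sum_filter_add_sum_filter_not, hsumg]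
      have hA0sum : ∑ e ∈ A0, g e = 0 := by
        apply Finset.sum_eq_zero
        intro e he
        exact (Finset.mem_filter.mp he).2
      have hApsum : ∑ e ∈ Ap, g e = Ap.card + A2.card := by
        have hterm : ∀ e ∈ Ap, g e = 1 + (if g e = 2 then 1 else 0) := by
          intro e he
          rw [hApdef, Finset.mem_filter] at he
          have := hg2 e he.1
          split_ifs with h
          · omega
          · omega
        rw [Finset.sum_congr rfl hterm, Finset.sum_add_distrib, Finset.sum_const, smul_eq_mul,
          mul_one]
        congr 1
        rw [← Finset.card_filter]
        congr 1
        rw [hApdef, hA2def, Finset.filter_filter]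
        apply Finset.filter_congr
        intro e _
        constructor
        · intro h; exact h.2
        · intro h; exact ⟨by omega, h⟩
      have hA2m : A2.card ≤ m := by
        have hsubF : ↑A2 ⊆ F.edgeSet := by
          intro e he
          rw [Finset.mem_coe, hA2def, Finset.mem_filter] at he
          obtain ⟨heE, heg⟩ := he
          induction e with
          | _ a b =>
            have hab : a ≠ b := by
              intro heq
              exact hnondiag _ heE (by rw [heq]; exact Sym2.isDiag_iff_proj_eq.mpr rfl)
            have hsub : S.filter (fun v => v ∈ s(a, b)) ⊆ {a, b} := by
              intro v hv
              rw [Finset.mem_filter] at hv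
              rcases Sym2.mem_iff.mp hv.2 with rfl | rfl
              · exact Finset.mem_insert_self _ _
              · exact Finset.mem_insert_of_mem (Finset.mem_singleton_self _)
            have hcard2 : ({a, b} : Finset (Fin n)).card = 2 := by
              rw [Finset.card_insert_of_notMem (by simpa using hab), Finset.card_singleton]
            have heq : S.filter (fun v => v ∈ s(a, b)) = {a, b} :=
              Finset.eq_of_subset_of_card_le hsub (by rw [hcard2]; exact le_of_eq heg.symm)
            have haS : a ∈ S := by
              have : a ∈ S.filter (fun v => v ∈ s(a, b)) := by
                rw [heq]; exact Finset.mem_insert_self _ _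
              exact (Finset.mem_filter.mp this).1
            have hbS : b ∈ S := by
              have : b ∈ S.filter (fun v => v ∈ s(a, b)) := by
                rw [heq]; exact Finset.mem_insert_of_mem (Finset.mem_singleton_self _)
              exact (Finset.mem_filter.mp this).1
            have hasmall : ¬ (r-1)*k ≤ (a : ℕ) := by
              have := (Finset.mem_filter.mp haS).2
              rw [← hι_last a]; exact this
            have hbsmall : ¬ (r-1)*k ≤ (b : ℕ) := by
              have := (Finset.mem_filter.mp hbS).2
              rw [← hι_last b]; exact this
            have hGF : (G ⊔ F).Adj a b :=
              (SimpleGraph.mem_edgeSet _).mp (H.edges_subset_edgeSet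
                (List.mem_toFinset.mp heE))
            rcases (SimpleGraph.sup_adj _ _ _ _).mp hGF with hGab | hFab
            · exfalso
              rcases (hAdj a b).mp hGab with ⟨_, h | h⟩
              · exact hasmall h
              · exact hbsmall h
            · exact (SimpleGraph.mem_edgeSet F).mpr hFab
        calc A2.card = (↑A2 : Set (Sym2 (Fin n))).ncard := (Set.ncard_coe_finset A2).symm
        _ ≤ F.edgeSet.ncard := Set.ncard_le_ncard hsubF (Set.toFinite _)
        _ = m := hF
      -- final arithmetic
      have hA0card : A0.card ≤ 2*k + m := by
        have h1 : Ap.card + A2.card = 2 * ((r-1)*k) := by omega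
        have h2 : n = 2*((r-1)*k) + 2*k := by omega
        omega
      calc ((A0.card : ℕ) : ℝ) ≤ ((2*k + m : ℕ) : ℝ) := by exact_mod_cast hA0card
      _ = 2*(k:ℝ) + m := by push_cast; ring
      _ ≤ (n : ℝ) / r + 2 * ((r : ℝ) - 1) * m := by
          rw [hnrR]
          have hm0 : (0 : ℝ) ≤ (m : ℝ) := Nat.cast_nonneg m
          have hr2 : (2 : ℝ) ≤ (r : ℝ) := by exact_mod_cast hr
          nlinarith
    · -- a small colour
      have hclt : (c : ℕ) < r - 1 := by
        have := c.isLt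
        have : (c : ℕ) ≠ r - 1 := by
          intro heq
          exact hc (Fin.ext (by simp [hlastdef, heq]))
        omega
      set B : Finset (Fin n) := Finset.univ.filter (fun v : Fin n => ι v = c) with hBdef
      have hBcard : B.card = k := by
        rw [hBdef]
        have : Finset.univ.filter (fun v : Fin n => ι v = c)
            = Finset.univ.filter (fun v : Fin n => (c : ℕ)*k ≤ v.val ∧ v.val < (c:ℕ)*k + k) := by
          apply Finset.filter_congr
          intro v _
          exact hι_small v c hclt
        rw [this, aux_card_fin_interval n ((c:ℕ)*k) ((c:ℕ)*k + k) ?_]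
        · omega
        · have hck : ((c : ℕ) + 1) * k ≤ (r - 1) * k := Nat.mul_le_mul_right k (by omega)
          have h3 : ((c : ℕ) + 1) * k = (c : ℕ) * k + k := by ring
          omega
      have hsub : E.filter (fun e => χ e = c) ⊆ B.biUnion (fun v => E.filter (fun e => v ∈ e)) := by
        intro e he
        rw [Finset.mem_filter] at he
        obtain ⟨heE, hec⟩ := he
        induction e with
        | _ a b =>
          rw [hχ a b] at hec
          rw [Finset.mem_biUnion]
          rcases min_eq_iff.mp hec with ⟨h1, _⟩ | ⟨h1, _⟩
          · exact ⟨a, Finset.mem_filter.mpr ⟨Finset.mem_univ a, h1⟩,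
              Finset.mem_filter.mpr ⟨heE, Sym2.mem_mk_left a b⟩⟩
          · exact ⟨b, Finset.mem_filter.mpr ⟨Finset.mem_univ b, h1⟩,
              Finset.mem_filter.mpr ⟨heE, Sym2.mem_mk_right a b⟩⟩
      have hcount : (E.filter (fun e => χ e = c)).card ≤ 2 * k := by
        calc (E.filter (fun e => χ e = c)).card
            ≤ (B.biUnion (fun v => E.filter (fun e => v ∈ e))).card := Finset.card_le_card hsub
        _ ≤ ∑ v ∈ B, (E.filter (fun e => v ∈ e)).card := Finset.card_biUnion_le
        _ = ∑ _v ∈ B, 2 := Finset.sum_congr rfl (fun v _ => htwo v)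
        _ = 2 * k := by rw [Finset.sum_const, hBcard]; ring
      calc (((E.filter (fun e => χ e = c)).card : ℕ) : ℝ) ≤ ((2*k : ℕ) : ℝ) := by
            exact_mod_cast hcount
      _ = 2*(k:ℝ) := by push_cast; ring
      _ ≤ (n : ℝ) / r + 2 * ((r : ℝ) - 1) * m := by
          rw [hnrR]
          have hm0 : (0 : ℝ) ≤ (m : ℝ) := Nat.cast_nonneg m
          have hr2 : (2 : ℝ) ≤ (r : ℝ) := by exact_mod_cast hr
          nlinarith
end

section
/- Let β > ε > 0 be real constants. There exists a constant C = C(β, ε) > 0 such that for every p = p(n) ≥ C/n, with high probability the random graph G(n,p) satisfies: for every vertex subset U with |U| ≥ βn, the induced subgraph G(n,p)[U] contains a path with at least (β − ε)n vertices. -/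
open SimpleGraph Filter
open scoped Classical

/-- The probability that the binomial random graph `G(n,p)` satisfies property `P`. -/
noncomputable def erProb (n : ℕ) (p : ℝ) (P : SimpleGraph (Fin n) → Prop) : ℝ :=
  ∑ G : SimpleGraph (Fin n),
    if P G then p ^ G.edgeSet.ncard * (1 - p) ^ (n.choose 2 - G.edgeSet.ncard) else 0

variable {V : Type*} [DecidableEq V]

lemma dfs_aux (H : SimpleGraph V) (k : ℕ)
    (hexp : ∀ A B : Finset V, Disjoint A B → A.card = k → B.card = k →
      ∃ a ∈ A, ∃ b ∈ B, H.Adj a b) :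
    ∀ (m : ℕ) (S T : Finset V) (u v : V) (P : H.Walk u v),
      2 * T.card + P.support.length ≤ m →
      P.IsPath →
      Disjoint S T →
      (∀ x ∈ P.support, x ∉ S ∧ x ∉ T) →
      (∀ s ∈ S, ∀ t ∈ T, ¬ H.Adj s t) →
      k ≤ T.card →
      ∃ (u' : V) (v' : V) (P' : H.Walk u' v'), P'.IsPath ∧
        (∀ x ∈ P'.support, x ∈ S ∨ x ∈ T ∨ x ∈ P.support) ∧
        S.card + T.card + P.support.length + 1 ≤ P'.support.length + 2 * k := by
  intro m
  induction m with
  | zero =>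
    intro S T u v P hm _ _ _ _ _
    have := P.support_ne_nil
    have : 1 ≤ P.support.length := List.length_pos_iff.mpr this
    omega
  | succ m ih =>
    intro S T u v P hm hP hST hdisj hno hk
    by_cases hTk : T.card = k
    · refine ⟨u, v, P, hP, fun x hx => Or.inr (Or.inr hx), ?_⟩
      have hS : S.card < k := by
        by_contra hcon
        push_neg at hcon
        obtain ⟨A, hA, hAcard⟩ := Finset.exists_subset_card_eq hcon
        obtain ⟨a, ha, b, hb, hab⟩ := hexp A T
          (Finset.disjoint_of_subset_left hA hST) hAcard hTk
        exact hno a (hA ha) b hb hab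
      omega
    · have hTk' : k < T.card := lt_of_le_of_ne hk (Ne.symm hTk)
      by_cases hnb : ∃ w ∈ T, H.Adj u w
      · obtain ⟨w, hwT, hadj⟩ := hnb
        have hwP : w ∉ P.support := fun h => (hdisj w h).2 hwT
        obtain ⟨u', v', P', hP', hmem, hcount⟩ :=
          ih S (T.erase w) w v (Walk.cons hadj.symm P)
            (by
              have h1 : (Walk.cons hadj.symm P).support.length = P.support.length + 1 := by
                simp [Walk.support_cons]
              have h2 : (T.erase w).card = T.card - 1 := Finset.card_erase_of_mem hwT
              omega)
            (hP.cons hwP)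
            (Finset.disjoint_of_subset_right (Finset.erase_subset _ _) hST)
            (by
              intro x hx
              rw [Walk.support_cons, List.mem_cons] at hx
              rcases hx with rfl | hx
              · exact ⟨fun hxS => Finset.disjoint_left.mp hST hxS hwT,
                  Finset.notMem_erase _ _⟩
              · exact ⟨(hdisj x hx).1, fun h => (hdisj x hx).2 (Finset.mem_of_mem_erase h)⟩)
            (fun s hs t ht => hno s hs t (Finset.mem_of_mem_erase ht))
            (by
              have : (T.erase w).card = T.card - 1 := Finset.card_erase_of_mem hwT
              omega)
        refine ⟨u', v', P', hP', ?_, ?_⟩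
        · intro x hx
          rcases hmem x hx with h | h | h
          · exact Or.inl h
          · exact Or.inr (Or.inl (Finset.mem_of_mem_erase h))
          · rw [Walk.support_cons, List.mem_cons] at h
            rcases h with rfl | h
            · exact Or.inr (Or.inl hwT)
            · exact Or.inr (Or.inr h)
        · have h1 : (Walk.cons hadj.symm P).support.length = P.support.length + 1 := by
            simp [Walk.support_cons]
          have h2 : (T.erase w).card = T.card - 1 := Finset.card_erase_of_mem hwT
          omega
      · push_neg at hnb
        cases P with
        | nil =>
          have hT0 : T.Nonempty := Finset.card_pos.mp (by omega)
          obtain ⟨t, ht⟩ := hT0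
          have huT : u ∉ T := (hdisj u (by simp)).2
          have huS : u ∉ S := (hdisj u (by simp)).1
          obtain ⟨u', v', P', hP', hmem, hcount⟩ :=
            ih (insert u S) (T.erase t) t t Walk.nil
              (by
                have h2 : (T.erase t).card = T.card - 1 := Finset.card_erase_of_mem ht
                simp only [Walk.support_nil, List.length_singleton] at hm ⊢
                omega)
              Walk.IsPath.nil
              (by
                rw [Finset.disjoint_insert_left]
                exact ⟨fun h => huT (Finset.mem_of_mem_erase h),
                  Finset.disjoint_of_subset_right (Finset.erase_subset _ _) hST⟩)
              (by
                intro x hx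
                simp only [Walk.support_nil, List.mem_singleton] at hx
                subst hx
                refine ⟨?_, Finset.notMem_erase _ _⟩
                rw [Finset.mem_insert]
                rintro (rfl | h)
                · exact huT ht
                · exact Finset.disjoint_left.mp hST h ht
              )
              (by
                intro s hs t' ht'
                rcases Finset.mem_insert.mp hs with rfl | hs
                · exact hnb t' (Finset.mem_of_mem_erase ht')
                · exact hno s hs t' (Finset.mem_of_mem_erase ht'))
              (by
                have : (T.erase t).card = T.card - 1 := Finset.card_erase_of_mem ht
                omega)
          refine ⟨u', v', P', hP', ?_, ?_⟩
          · intro x hx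
            rcases hmem x hx with h | h | h
            · rcases Finset.mem_insert.mp h with rfl | h
              · exact Or.inr (Or.inr (by simp))
              · exact Or.inl h
            · exact Or.inr (Or.inl (Finset.mem_of_mem_erase h))
            · simp only [Walk.support_nil, List.mem_singleton] at h
              subst h
              exact Or.inr (Or.inl ht)
          · have h1 : (insert u S).card = S.card + 1 := Finset.card_insert_of_notMem huS
            have h2 : (T.erase t).card = T.card - 1 := Finset.card_erase_of_mem ht
            simp only [Walk.support_nil, List.length_singleton] at hcount ⊢
            omega
        | cons h Q =>
          rename_i u₂
          rw [Walk.cons_isPath_iff] at hP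
          obtain ⟨hQ, huQ⟩ := hP
          have huS : u ∉ S := (hdisj u (by simp)).1
          have huT : u ∉ T := (hdisj u (by simp)).2
          obtain ⟨u', v', P', hP', hmem, hcount⟩ :=
            ih (insert u S) T u₂ v Q
              (by
                have : (Walk.cons h Q).support.length = Q.support.length + 1 := by
                  simp [Walk.support_cons]
                omega)
              hQ
              (by rw [Finset.disjoint_insert_left]; exact ⟨huT, hST⟩)
              (by
                intro x hx
                have hx' : x ∈ (Walk.cons h Q).support := by
                  rw [Walk.support_cons]; exact List.mem_cons_of_mem _ hx
                refine ⟨?_, (hdisj x hx').2⟩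
                rw [Finset.mem_insert]
                rintro (rfl | hxS)
                · exact huQ hx
                · exact (hdisj x hx').1 hxS)
              (by
                intro s hs t ht
                rcases Finset.mem_insert.mp hs with rfl | hs
                · exact hnb t ht
                · exact hno s hs t ht)
              hk
          refine ⟨u', v', P', hP', ?_, ?_⟩
          · intro x hx
            rcases hmem x hx with h' | h' | h'
            · rcases Finset.mem_insert.mp h' with rfl | h'
              · exact Or.inr (Or.inr (by simp [Walk.support_cons]))
              · exact Or.inl h'
            · exact Or.inr (Or.inl h')
            · exact Or.inr (Or.inr (by rw [Walk.support_cons]; exact List.mem_cons_of_mem _ h'))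
          · have h1 : (insert u S).card = S.card + 1 := Finset.card_insert_of_notMem huS
            have h2 : (Walk.cons h Q).support.length = Q.support.length + 1 := by
              simp [Walk.support_cons]
            omega

lemma path_in_subset (H : SimpleGraph V) (k : ℕ)
    (hexp : ∀ A B : Finset V, Disjoint A B → A.card = k → B.card = k →
      ∃ a ∈ A, ∃ b ∈ B, H.Adj a b)
    (U : Finset V) (hU : k + 1 ≤ U.card) :
    ∃ (u : V) (v : V) (P : H.Walk u v), P.IsPath ∧
      (∀ x ∈ P.support, x ∈ U) ∧ U.card + 1 ≤ (P.length + 1) + 2 * k := by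
  have hU0 : U.Nonempty := Finset.card_pos.mp (by omega)
  obtain ⟨u₀, hu₀⟩ := hU0
  obtain ⟨u', v', P', hP', hmem, hcount⟩ :=
    dfs_aux H k hexp (2 * (U.erase u₀).card + 1) ∅ (U.erase u₀) u₀ u₀ Walk.nil
      (by simp)
      Walk.IsPath.nil
      (Finset.disjoint_empty_left _)
      (by
        intro x hx
        simp only [Walk.support_nil, List.mem_singleton] at hx
        subst hx
        exact ⟨Finset.notMem_empty _, Finset.notMem_erase _ _⟩)
      (by intro s hs; exact absurd hs (Finset.notMem_empty _))
      (by
        have : (U.erase u₀).card = U.card - 1 := Finset.card_erase_of_mem hu₀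
        omega)
  refine ⟨u', v', P', hP', ?_, ?_⟩
  · intro x hx
    rcases hmem x hx with h | h | h
    · exact absurd h (Finset.notMem_empty _)
    · exact Finset.mem_of_mem_erase h
    · simp only [Walk.support_nil, List.mem_singleton] at h
      subst h; exact hu₀
  · have h1 : (U.erase u₀).card = U.card - 1 := Finset.card_erase_of_mem hu₀
    have h2 : P'.support.length = P'.length + 1 := Walk.length_support _
    simp only [Finset.card_empty, Walk.support_nil, List.length_singleton] at hcount
    omega
abbrev κ (n : ℕ) := {e : Sym2 (Fin n) // ¬ e.IsDiag}

noncomputable def graphEquiv (n : ℕ) : SimpleGraph (Fin n) ≃ Finset (κ n) where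
  toFun G := Finset.univ.filter (fun e : κ n => ↑e ∈ G.edgeSet)
  invFun s := SimpleGraph.fromEdgeSet (Subtype.val '' (s : Set (κ n)))
  left_inv G := by
    dsimp only
    have : Subtype.val '' (↑(Finset.univ.filter (fun e : κ n => ↑e ∈ G.edgeSet)) :
        Set (κ n)) = G.edgeSet := by
      ext e
      simp only [Set.mem_image, Finset.coe_filter, Finset.mem_univ, true_and,
        Set.mem_setOf_eq]
      constructor
      · rintro ⟨⟨e', he'⟩, hmem, rfl⟩; exact hmem
      · intro he; exact ⟨⟨e, G.not_isDiag_of_mem_edgeSet he⟩, he, rfl⟩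
    rw [this, SimpleGraph.fromEdgeSet_edgeSet]
  right_inv s := by
    dsimp only
    ext e
    simp only [Finset.mem_filter, Finset.mem_univ, true_and,
      SimpleGraph.edgeSet_fromEdgeSet, Set.mem_diff, Set.mem_image, Finset.mem_coe,
      Set.mem_setOf_eq]
    constructor
    · rintro ⟨⟨⟨e', he'⟩, hmem, hval⟩, _⟩
      rwa [show (⟨e', he'⟩ : κ n) = e from Subtype.ext hval] at hmem
    · intro he
      exact ⟨⟨e, he, rfl⟩, e.2⟩

lemma mem_graphEquiv {n : ℕ} (G : SimpleGraph (Fin n)) (e : κ n) :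
    e ∈ graphEquiv n G ↔ ↑e ∈ G.edgeSet := by
  simp [graphEquiv]

lemma card_graphEquiv {n : ℕ} (G : SimpleGraph (Fin n)) :
    (graphEquiv n G).card = G.edgeSet.ncard := by
  rw [Set.ncard_eq_toFinset_card']
  refine Finset.card_bij (fun e _ => ↑e) ?_ ?_ ?_
  · intro e he
    rw [Set.mem_toFinset]
    exact (mem_graphEquiv G e).mp he
  · intro a ha b hb hab
    exact Subtype.ext hab
  · intro e he
    rw [Set.mem_toFinset] at he
    exact ⟨⟨e, G.not_isDiag_of_mem_edgeSet he⟩, (mem_graphEquiv G _).mpr he, rfl⟩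

lemma card_kappa (n : ℕ) : Fintype.card (κ n) = n.choose 2 := by
  rw [Sym2.card_subtype_not_diag, Fintype.card_fin]

lemma sum_powerset_weights {ι : Type*} [DecidableEq ι] (A : Finset ι) (p q : ℝ) :
    ∑ s ∈ A.powerset, p ^ s.card * q ^ (A.card - s.card) = (p + q) ^ A.card := by
  rw [← Finset.prod_const, Finset.prod_add]
  refine Finset.sum_congr rfl ?_
  intro t ht
  rw [Finset.mem_powerset] at ht
  rw [Finset.prod_const, Finset.prod_const, Finset.card_sdiff_of_subset ht]

lemma erProb_eq_sum (n : ℕ) (p : ℝ) (P : SimpleGraph (Fin n) → Prop) :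
    erProb n p P = ∑ s ∈ (Finset.univ : Finset (κ n)).powerset,
      if P ((graphEquiv n).symm s) then
        p ^ s.card * (1 - p) ^ (n.choose 2 - s.card) else 0 := by
  rw [Finset.powerset_univ, erProb]
  rw [← Equiv.sum_comp (graphEquiv n)
    (fun s => if P ((graphEquiv n).symm s) then
      p ^ s.card * (1 - p) ^ (n.choose 2 - s.card) else 0)]
  refine Finset.sum_congr rfl ?_
  intro G _
  rw [Equiv.symm_apply_apply, card_graphEquiv]

lemma weight_nonneg {n : ℕ} {p : ℝ} (hp : 0 ≤ p) (hp1 : p ≤ 1)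
    (G : SimpleGraph (Fin n)) :
    0 ≤ p ^ G.edgeSet.ncard * (1 - p) ^ (n.choose 2 - G.edgeSet.ncard) :=
  mul_nonneg (pow_nonneg hp _) (pow_nonneg (by linarith) _)

lemma erProb_true (n : ℕ) (p : ℝ) : erProb n p (fun _ => True) = 1 := by
  rw [erProb_eq_sum]
  simp only [if_true]
  have hcard : (Finset.univ : Finset (κ n)).card = n.choose 2 := by
    rw [Finset.card_univ, card_kappa]
  calc ∑ s ∈ (Finset.univ : Finset (κ n)).powerset,
        p ^ s.card * (1 - p) ^ (n.choose 2 - s.card)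
      = ∑ s ∈ (Finset.univ : Finset (κ n)).powerset,
        p ^ s.card * (1 - p) ^ ((Finset.univ : Finset (κ n)).card - s.card) := by
        rw [hcard]
    _ = (p + (1 - p)) ^ (Finset.univ : Finset (κ n)).card :=
        sum_powerset_weights _ p (1 - p)
    _ = 1 := by norm_num

lemma erProb_add_compl (n : ℕ) (p : ℝ) (P : SimpleGraph (Fin n) → Prop) :
    erProb n p P + erProb n p (fun G => ¬ P G) = 1 := by
  rw [show (1 : ℝ) = erProb n p (fun _ => True) from (erProb_true n p).symm,
    erProb, erProb, erProb, ← Finset.sum_add_distrib]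
  refine Finset.sum_congr rfl fun G _ => ?_
  by_cases h : P G <;> simp [h]

lemma erProb_nonneg {n : ℕ} {p : ℝ} (hp : 0 ≤ p) (hp1 : p ≤ 1)
    (P : SimpleGraph (Fin n) → Prop) : 0 ≤ erProb n p P := by
  refine Finset.sum_nonneg fun G _ => ?_
  split
  · exact weight_nonneg hp hp1 G
  · exact le_refl 0

lemma erProb_le_one {n : ℕ} {p : ℝ} (hp : 0 ≤ p) (hp1 : p ≤ 1)
    (P : SimpleGraph (Fin n) → Prop) : erProb n p P ≤ 1 := by
  have h := erProb_add_compl n p P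
  have h2 := erProb_nonneg hp hp1 (fun G => ¬ P G)
  linarith

set_option maxHeartbeats 1000000 in
lemma erProb_noedges {n : ℕ} (p : ℝ) (F : Finset (κ n)) :
    erProb n p (fun G => ∀ e ∈ F, (e : Sym2 (Fin n)) ∉ G.edgeSet) = (1 - p) ^ F.card := by
  rw [erProb_eq_sum]
  have hiff : ∀ (s : Finset (κ n)) (e : κ n),
      (e : Sym2 (Fin n)) ∈ ((graphEquiv n).symm s).edgeSet ↔ e ∈ s := by
    intro s e
    rw [← mem_graphEquiv ((graphEquiv n).symm s) e, Equiv.apply_symm_apply]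
  have hmem : ∀ s : Finset (κ n),
      (∀ e ∈ F, (e : Sym2 (Fin n)) ∉ ((graphEquiv n).symm s).edgeSet) ↔ Disjoint s F := by
    intro s
    rw [Finset.disjoint_right]
    constructor
    · intro h e heF hes
      exact h e heF ((hiff s e).mpr hes)
    · intro h e heF hes
      exact h heF ((hiff s e).mp hes)
  have hN : (Finset.univ : Finset (κ n)).card = n.choose 2 := by
    rw [Finset.card_univ, card_kappa]
  have hFsub : F ⊆ Finset.univ := Finset.subset_univ F
  have hFcard : F.card ≤ n.choose 2 := hN ▸ Finset.card_le_card hFsub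
  have hpowsub : ((Finset.univ : Finset (κ n)) \ F).powerset ⊆
      (Finset.univ : Finset (κ n)).powerset :=
    Finset.powerset_mono.mpr (Finset.sdiff_subset)
  simp only [hmem]
  rw [← Finset.sum_subset hpowsub (by
    intro s hs hns
    rw [if_neg]
    intro hdisj
    exact hns (Finset.mem_powerset.mpr (Finset.subset_sdiff.mpr
      ⟨Finset.subset_univ s, hdisj⟩)))]
  calc ∑ s ∈ ((Finset.univ : Finset (κ n)) \ F).powerset,
        (if Disjoint s F then p ^ s.card * (1 - p) ^ (n.choose 2 - s.card) else 0)
      = ∑ s ∈ ((Finset.univ : Finset (κ n)) \ F).powerset,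
        p ^ s.card * (1 - p) ^ (n.choose 2 - s.card) := by
        refine Finset.sum_congr rfl fun s hs => ?_
        rw [Finset.mem_powerset, Finset.subset_sdiff] at hs
        exact if_pos hs.2
    _ = ∑ s ∈ ((Finset.univ : Finset (κ n)) \ F).powerset,
        (1 - p) ^ F.card *
          (p ^ s.card * (1 - p) ^ (((Finset.univ : Finset (κ n)) \ F).card - s.card)) := by
        refine Finset.sum_congr rfl fun s hs => ?_
        rw [Finset.mem_powerset] at hs
        have hsc : s.card ≤ ((Finset.univ : Finset (κ n)) \ F).card := Finset.card_le_card hs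
        have hsd : ((Finset.univ : Finset (κ n)) \ F).card = n.choose 2 - F.card := by
          rw [Finset.card_sdiff_of_subset hFsub, hN]
        have : n.choose 2 - s.card =
            (((Finset.univ : Finset (κ n)) \ F).card - s.card) + F.card := by omega
        rw [this, pow_add]
        ring
    _ = (1 - p) ^ F.card * (p + (1 - p)) ^ ((Finset.univ : Finset (κ n)) \ F).card := by
        rw [← Finset.mul_sum, sum_powerset_weights]
    _ = (1 - p) ^ F.card := by norm_num

lemma erProb_union_bound {n : ℕ} {p : ℝ} (hp : 0 ≤ p) (hp1 : p ≤ 1)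
    {ι : Type*} (I : Finset ι) (E : ι → SimpleGraph (Fin n) → Prop)
    (P : SimpleGraph (Fin n) → Prop)
    (h : ∀ G : SimpleGraph (Fin n), ¬ P G → ∃ i ∈ I, E i G) :
    1 - ∑ i ∈ I, erProb n p (E i) ≤ erProb n p P := by
  have key : erProb n p (fun G => ¬ P G) ≤ ∑ i ∈ I, erProb n p (E i) := by
    rw [erProb]
    have swap : ∑ i ∈ I, erProb n p (E i) =
        ∑ G : SimpleGraph (Fin n), ∑ i ∈ I,
          (if E i G then p ^ G.edgeSet.ncard * (1 - p) ^ (n.choose 2 - G.edgeSet.ncard)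
            else 0) := by
      rw [Finset.sum_comm]
      rfl
    rw [swap]
    refine Finset.sum_le_sum fun G _ => ?_
    by_cases hG : P G
    · rw [if_neg (by simpa using hG)]
      exact Finset.sum_nonneg fun i _ => by
        try dsimp only
        split
        · exact weight_nonneg hp hp1 G
        · exact le_refl 0
    · rw [if_pos hG]
      obtain ⟨i, hi, hEi⟩ := h G hG
      calc p ^ G.edgeSet.ncard * (1 - p) ^ (n.choose 2 - G.edgeSet.ncard)
          = if E i G then
              p ^ G.edgeSet.ncard * (1 - p) ^ (n.choose 2 - G.edgeSet.ncard) else 0 := by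
            rw [if_pos hEi]
        _ ≤ _ := Finset.single_le_sum (f := fun i =>
              if E i G then
                p ^ G.edgeSet.ncard * (1 - p) ^ (n.choose 2 - G.edgeSet.ncard) else 0)
              (fun i _ => by
                try dsimp only
                split
                · exact weight_nonneg hp hp1 G
                · exact le_refl 0) hi
  have h2 := erProb_add_compl n p P
  linarith

noncomputable def betweenF {n : ℕ} (A B : Finset (Fin n)) : Finset (κ n) :=
  Finset.univ.filter (fun e : κ n => ∃ a ∈ A, ∃ b ∈ B, (e : Sym2 (Fin n)) = s(a, b))

lemma card_betweenF {n k : ℕ} {A B : Finset (Fin n)} (hAB : Disjoint A B)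
    (hA : A.card = k) (hB : B.card = k) : (betweenF A B).card = k * k := by
  have : (betweenF A B).card = (A ×ˢ B).card := by
    refine (Finset.card_bij (fun (x : Fin n × Fin n) (hx : x ∈ A ×ˢ B) =>
      (⟨s(x.1, x.2), by
        rw [Finset.mem_product] at hx
        rw [Sym2.mk_isDiag_iff]
        exact fun h => Finset.disjoint_left.mp hAB hx.1 (h ▸ hx.2)⟩ : κ n))
      ?_ ?_ ?_).symm
    · intro x hx
      rw [Finset.mem_product] at hx
      exact Finset.mem_filter.mpr ⟨Finset.mem_univ _, x.1, hx.1, x.2, hx.2, rfl⟩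
    · intro x hx y hy hxy
      rw [Finset.mem_product] at hx hy
      have := Subtype.ext_iff.mp hxy
      simp only [Sym2.eq, Sym2.rel_iff', Prod.mk.injEq, Prod.swap_prod_mk] at this
      rcases this with ⟨h1, h2⟩ | ⟨h1, h2⟩
      · exact Prod.ext h1 h2
      · exact absurd (h1 ▸ hy.2) (Finset.disjoint_left.mp hAB hx.1)
    · intro e he
      rw [betweenF, Finset.mem_filter] at he
      obtain ⟨a, ha, b, hb, heq⟩ := he.2
      exact ⟨(a, b), Finset.mem_product.mpr ⟨ha, hb⟩, Subtype.ext heq.symm⟩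
  rw [this, Finset.card_product, hA, hB]

lemma event_iff {n : ℕ} (A B : Finset (Fin n)) (G : SimpleGraph (Fin n)) :
    (∀ e ∈ betweenF A B, (e : Sym2 (Fin n)) ∉ G.edgeSet) ↔
      ∀ a ∈ A, ∀ b ∈ B, ¬ G.Adj a b := by
  constructor
  · intro h a ha b hb hadj
    have hne : ¬ (s(a, b) : Sym2 (Fin n)).IsDiag := by
      rw [Sym2.mk_isDiag_iff]; exact G.ne_of_adj hadj
    refine h ⟨s(a, b), hne⟩ ?_ (G.mem_edgeSet.mpr hadj)
    exact Finset.mem_filter.mpr ⟨Finset.mem_univ _, a, ha, b, hb, rfl⟩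
  · intro h e he hmem
    rw [betweenF, Finset.mem_filter] at he
    obtain ⟨a, ha, b, hb, heq⟩ := he.2
    rw [heq] at hmem
    exact h a ha b hb (G.mem_edgeSet.mp hmem)

lemma erProb_congr {n : ℕ} {p : ℝ} {P Q : SimpleGraph (Fin n) → Prop}
    (h : ∀ G, P G ↔ Q G) : erProb n p P = erProb n p Q := by
  unfold erProb
  exact Finset.sum_congr rfl fun G _ => if_congr (h G) rfl rfl

lemma expansion_prob {n k : ℕ} {p : ℝ} (hp : 0 ≤ p) (hp1 : p ≤ 1)
    (P : SimpleGraph (Fin n) → Prop)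
    (himp : ∀ G : SimpleGraph (Fin n),
      (∀ A B : Finset (Fin n), Disjoint A B → A.card = k → B.card = k →
        ∃ a ∈ A, ∃ b ∈ B, G.Adj a b) → P G) :
    1 - ((2:ℝ) ^ n * 2 ^ n) * (1 - p) ^ (k * k) ≤ erProb n p P := by
  set I : Finset (Finset (Fin n) × Finset (Fin n)) :=
    (Finset.powersetCard k Finset.univ ×ˢ Finset.powersetCard k Finset.univ).filter
      (fun AB => Disjoint AB.1 AB.2) with hI
  have hbound := erProb_union_bound hp hp1 I
    (fun AB G => ∀ a ∈ AB.1, ∀ b ∈ AB.2, ¬ G.Adj a b) P ?_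
  · refine le_trans ?_ hbound
    have hterm : ∀ AB ∈ I,
        erProb n p (fun G => ∀ a ∈ AB.1, ∀ b ∈ AB.2, ¬ G.Adj a b) = (1 - p) ^ (k * k) := by
      intro AB hAB
      rw [hI, Finset.mem_filter, Finset.mem_product, Finset.mem_powersetCard_univ,
        Finset.mem_powersetCard_univ] at hAB
      obtain ⟨⟨hA, hB⟩, hdisj⟩ := hAB
      rw [erProb_congr (fun G => (event_iff AB.1 AB.2 G).symm),
        erProb_noedges, card_betweenF hdisj hA hB]
    rw [Finset.sum_congr rfl hterm, Finset.sum_const, nsmul_eq_mul]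
    have hIcard : (I.card : ℝ) ≤ (2:ℝ) ^ n * 2 ^ n := by
      have h1 : I.card ≤ (Finset.powersetCard k (Finset.univ : Finset (Fin n))).card *
          (Finset.powersetCard k (Finset.univ : Finset (Fin n))).card := by
        calc I.card ≤ ((Finset.powersetCard k (Finset.univ : Finset (Fin n))) ×ˢ
            (Finset.powersetCard k (Finset.univ : Finset (Fin n)))).card :=
              Finset.card_filter_le _ _
          _ = _ := Finset.card_product _ _
      have h2 : (Finset.powersetCard k (Finset.univ : Finset (Fin n))).card ≤ 2 ^ n := by
        calc (Finset.powersetCard k (Finset.univ : Finset (Fin n))).card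
            ≤ (Finset.univ : Finset (Fin n)).powerset.card :=
              Finset.card_le_card (fun s hs =>
                Finset.mem_powerset.mpr (Finset.mem_powersetCard.mp hs).1)
          _ = 2 ^ n := by rw [Finset.card_powerset, Finset.card_univ, Fintype.card_fin]
      have := Nat.mul_le_mul h2 h2
      calc (I.card : ℝ) ≤ ((2^n * 2^n : ℕ) : ℝ) := by
            exact_mod_cast le_trans h1 this
        _ = (2:ℝ)^n * 2^n := by push_cast; ring
    have hpow : (0:ℝ) ≤ (1 - p) ^ (k * k) := pow_nonneg (by linarith) _
    nlinarith [mul_le_mul_of_nonneg_right hIcard hpow]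
  · intro G hG
    by_contra hcon
    push_neg at hcon
    apply hG
    apply himp
    intro A B hdisj hA hB
    by_contra hno
    push_neg at hno
    refine absurd (hcon (A, B) ?_) (fun ⟨a, ha, b, hb, hab⟩ => hno a ha b hb hab)
    rw [hI, Finset.mem_filter, Finset.mem_product, Finset.mem_powersetCard_univ,
      Finset.mem_powersetCard_univ]
    exact ⟨⟨hA, hB⟩, hdisj⟩
/-- For constants `β > ε > 0` there is `C > 0` such that for every
`p = p(n) ≥ C/n`, with high probability `G(n,p)` satisfies: every vertex subset `U` with
`|U| ≥ β n` induces a subgraph containing a path with at least `(β - ε) n` vertices. -/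
theorem stmt_5 (β ε : ℝ) (hε : 0 < ε) (hβε : ε < β) :
    ∃ C : ℝ, 0 < C ∧
      ∀ p : ℕ → ℝ, (∀ n, C / n ≤ p n ∧ p n ≤ 1) →
        Tendsto
          (fun n => erProb n (p n) (fun R =>
            ∀ U : Finset (Fin n), β * n ≤ (U.card : ℝ) →
              ∃ (u v : Fin n) (P : R.Walk u v), P.IsPath ∧
                (∀ x ∈ P.support, x ∈ U) ∧
                (β - ε) * n ≤ ((P.length + 1 : ℕ) : ℝ)))
          atTop (nhds 1) := by
  refine ⟨32 / ε ^ 2, by positivity, ?_⟩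
  intro p hp
  have hp0 : ∀ n, 0 ≤ p n := fun n =>
    le_trans (div_nonneg (by positivity) (Nat.cast_nonneg n)) (hp n).1
  -- the decaying error term
  set r : ℝ := 4 * Real.exp (-2) with hr
  have hrpos : 0 ≤ r := by positivity
  have he2 : (4 : ℝ) < Real.exp 2 := by
    have h1 : Real.exp 2 = Real.exp 1 * Real.exp 1 := by
      rw [← Real.exp_add]; norm_num
    nlinarith [Real.exp_one_gt_d9]
  have hr1 : r < 1 := by
    have hpos := Real.exp_pos 2
    have hinv : (Real.exp 2)⁻¹ * Real.exp 2 = 1 := inv_mul_cancel₀ (ne_of_gt hpos)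
    have hinvpos : 0 < (Real.exp 2)⁻¹ := inv_pos.mpr hpos
    rw [hr, Real.exp_neg]
    nlinarith
  have hrtend : Tendsto (fun n : ℕ => 1 - r ^ n) atTop (nhds 1) := by
    have h0 := tendsto_pow_atTop_nhds_zero_of_lt_one hrpos hr1
    have h2 : Tendsto (fun _ : ℕ => (1 : ℝ)) atTop (nhds 1) := tendsto_const_nhds
    simpa using h2.sub h0
  -- eventual lower bound
  have h4 : ∀ᶠ (n : ℕ) in atTop, (4 / ε : ℝ) ≤ n :=
    tendsto_natCast_atTop_atTop.eventually_ge_atTop _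
  have hbeps : 0 < β - ε / 2 := by linarith
  have hb : ∀ᶠ (n : ℕ) in atTop, (1 / (β - ε / 2) : ℝ) ≤ n :=
    tendsto_natCast_atTop_atTop.eventually_ge_atTop _
  have h1 : ∀ᶠ (n : ℕ) in atTop, 1 ≤ n := Filter.eventually_ge_atTop 1
  have hlow : ∀ᶠ (n : ℕ) in atTop, 1 - r ^ n ≤ erProb n (p n) (fun R =>
      ∀ U : Finset (Fin n), β * n ≤ (U.card : ℝ) →
        ∃ (u v : Fin n) (P : R.Walk u v), P.IsPath ∧
          (∀ x ∈ P.support, x ∈ U) ∧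
          (β - ε) * n ≤ ((P.length + 1 : ℕ) : ℝ)) := by
    filter_upwards [h4, hb, h1] with n hn4 hnb hn1
    have hn0 : (0 : ℝ) < n := by exact_mod_cast Nat.lt_of_lt_of_le Nat.zero_lt_one hn1
    set k : ℕ := ⌊ε * n / 2⌋₊ with hk
    have hk_le : (k : ℝ) ≤ ε * n / 2 := Nat.floor_le (by positivity)
    have hk_ge : ε * n / 2 - 1 < (k : ℝ) := by
      have := Nat.lt_floor_add_one (ε * n / 2)
      linarith
    have hεn4 : (1 : ℝ) ≤ ε * n / 4 := by
      rw [div_le_iff₀ hε] at hn4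
      nlinarith
    have hk4 : ε * n / 4 ≤ (k : ℝ) := by linarith
    -- the implication: expansion implies the path property
    have himp : ∀ G : SimpleGraph (Fin n),
        (∀ A B : Finset (Fin n), Disjoint A B → A.card = k → B.card = k →
          ∃ a ∈ A, ∃ b ∈ B, G.Adj a b) →
        (∀ U : Finset (Fin n), β * n ≤ (U.card : ℝ) →
          ∃ (u v : Fin n) (P : G.Walk u v), P.IsPath ∧
            (∀ x ∈ P.support, x ∈ U) ∧
            (β - ε) * n ≤ ((P.length + 1 : ℕ) : ℝ)) := by
      intro G hexp U hU
      have hUcard : k + 1 ≤ U.card := by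
        have hstep : ε * n / 2 + 1 ≤ β * n := by
          rw [div_le_iff₀ hbeps] at hnb
          nlinarith
        have : ((k + 1 : ℕ) : ℝ) ≤ (U.card : ℝ) := by push_cast; linarith
        exact_mod_cast this
      obtain ⟨u, v, P, hP, hsupp, hlen⟩ := path_in_subset G k hexp U hUcard
      refine ⟨u, v, P, hP, hsupp, ?_⟩
      have hcast : (U.card : ℝ) + 1 ≤ ((P.length : ℝ) + 1) + 2 * k := by
        exact_mod_cast hlen
      push_cast
      linarith
    have hexp_prob := expansion_prob (k := k) (hp0 n) (hp n).2 _ himp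
    refine le_trans ?_ hexp_prob
    -- (2^n * 2^n) * (1 - p)^(k*k) ≤ r^n
    have hkey : ((2 : ℝ) ^ n * 2 ^ n) * (1 - p n) ^ (k * k) ≤ r ^ n := by
      have hpk2 : 2 * (n : ℝ) ≤ p n * (k * k) := by
        have hCn : (32 / ε ^ 2) / n ≤ p n := (hp n).1
        have hkk : (ε * n / 4) ^ 2 ≤ (k : ℝ) * k := by nlinarith
        have heq : (32 / ε ^ 2) / n * ((ε * n / 4) ^ 2) = 2 * n := by
          field_simp
          ring
        calc 2 * (n : ℝ) = (32 / ε ^ 2) / n * ((ε * n / 4) ^ 2) := heq.symm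
          _ ≤ (32 / ε ^ 2) / n * ((k : ℝ) * k) :=
              mul_le_mul_of_nonneg_left hkk (by positivity)
          _ ≤ p n * ((k : ℝ) * k) :=
              mul_le_mul_of_nonneg_right hCn (by positivity)
      calc ((2 : ℝ) ^ n * 2 ^ n) * (1 - p n) ^ (k * k)
          = 4 ^ n * (1 - p n) ^ (k * k) := by rw [← mul_pow]; norm_num
        _ ≤ 4 ^ n * Real.exp (-(p n)) ^ (k * k) := by
            refine mul_le_mul_of_nonneg_left ?_ (by positivity)
            refine pow_le_pow_left₀ (by linarith [(hp n).2]) ?_ _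
            linarith [Real.add_one_le_exp (-(p n))]
        _ = 4 ^ n * Real.exp ((k * k : ℕ) * (-(p n))) := by
            rw [Real.exp_nat_mul]
        _ ≤ 4 ^ n * Real.exp ((n : ℝ) * (-2)) := by
            refine mul_le_mul_of_nonneg_left (Real.exp_le_exp.mpr ?_) (by positivity)
            push_cast
            nlinarith
        _ = r ^ n := by
            rw [hr, mul_pow, ← Real.exp_nat_mul]
    linarith
  have hup : ∀ᶠ (n : ℕ) in atTop, erProb n (p n) (fun R =>
      ∀ U : Finset (Fin n), β * n ≤ (U.card : ℝ) →
        ∃ (u v : Fin n) (P : R.Walk u v), P.IsPath ∧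
          (∀ x ∈ P.support, x ∈ U) ∧
          (β - ε) * n ≤ ((P.length + 1 : ℕ) : ℝ)) ≤ 1 :=
    Filter.Eventually.of_forall fun n => erProb_le_one (hp0 n) (hp n).2 _
  exact tendsto_of_tendsto_of_tendsto_of_le_of_le' hrtend tendsto_const_nhds hlow hup
end

section
/- Let G be a graph and let k be a positive integer. If G is k-joined, then G contains a path with at least v(G) − 2k vertices, where v(G) is the number of vertices of G. -/
open SimpleGraph

/-- A graph is `k`-joined if between any two disjoint vertex sets of size `k`
there is an edge. -/
def KJoined {V : Type*} (G : SimpleGraph V) (k : ℕ) : Prop :=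
  ∀ A B : Finset V, A.card = k → B.card = k → Disjoint A B →
    ∃ a ∈ A, ∃ b ∈ B, G.Adj a b

lemma card_split {V : Type*} [Fintype V] [DecidableEq V] (s : List V) (F : Finset V)
    (hnd : s.Nodup) (hdisj : ∀ v ∈ s, v ∉ F) :
    (Finset.univ \ (s.toFinset ∪ F)).card + s.length + F.card = Fintype.card V := by
  have h1 : Disjoint s.toFinset F := by
    rw [Finset.disjoint_left]
    intro a ha
    exact hdisj a (List.mem_toFinset.mp ha)
  have h2 : (s.toFinset ∪ F).card = s.length + F.card := by
    rw [Finset.card_union_of_disjoint h1, List.toFinset_card_of_nodup hnd]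
  have h3 : (s.toFinset ∪ F) ⊆ Finset.univ := Finset.subset_univ _
  have h4 := Finset.card_sdiff_of_subset h3
  have h5 := Finset.card_le_card h3
  simp only [Finset.card_univ] at h4 h5
  omega

lemma F_small {V : Type*} [Fintype V] [DecidableEq V] (G : SimpleGraph V) (k : ℕ)
    (hj : KJoined G k) (s : List V) (F : Finset V)
    (hinv : ∀ f ∈ F, ∀ w, G.Adj f w → w ∈ s ∨ w ∈ F)
    (hN : k ≤ (Finset.univ \ (s.toFinset ∪ F)).card) :
    F.card < k := by
  by_contra h
  push_neg at h
  obtain ⟨A, hAF, hA⟩ := Finset.exists_subset_card_eq h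
  obtain ⟨B, hBN, hB⟩ := Finset.exists_subset_card_eq hN
  have hdisj : Disjoint A B := by
    rw [Finset.disjoint_left]
    intro a haA haB
    have h1 := hAF haA
    have h2 := hBN haB
    simp only [Finset.mem_sdiff, Finset.mem_union] at h2
    exact h2.2 (Or.inr h1)
  obtain ⟨a, ha, b, hb, hab⟩ := hj A B hA hB hdisj
  have h1 := hinv a (hAF ha) b hab
  have h2 := hBN hb
  simp only [Finset.mem_sdiff, Finset.mem_union, List.mem_toFinset] at h2
  tauto

lemma dfs_main {V : Type*} [Fintype V] [DecidableEq V] (G : SimpleGraph V)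
    (k : ℕ) (hk : 0 < k) (hj : KJoined G k) :
    ∀ (m : ℕ) (s : List V) (F : Finset V), s.Nodup → s.Chain' G.Adj →
      (∀ v ∈ s, v ∉ F) →
      (∀ f ∈ F, ∀ w, G.Adj f w → w ∈ s ∨ w ∈ F) →
      k ≤ (Finset.univ \ (s.toFinset ∪ F)).card →
      2 * (Finset.univ \ (s.toFinset ∪ F)).card + s.length ≤ m →
      ∃ l : List V, l.Nodup ∧ l.Chain' G.Adj ∧ Fintype.card V - 2 * k ≤ l.length := by
  intro m
  induction m with
  | zero =>
    intro s F _ _ _ _ hN hm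
    omega
  | succ m ih =>
    intro s F hnd hch hdF hinv hN hm
    have hFsmall : F.card < k := F_small G k hj s F hinv hN
    have hsplit := card_split s F hnd hdF
    rcases eq_or_lt_of_le hN with heq | hlt
    · -- stop: current stack is long enough
      refine ⟨s, hnd, hch, ?_⟩
      omega
    · match s with
      | [] =>
        -- start a new path at any unvisited vertex
        have hNne : (Finset.univ \ (([] : List V).toFinset ∪ F)).Nonempty :=
          Finset.card_pos.mp (by omega)
        obtain ⟨w, hw⟩ := hNne
        have hwF : w ∉ F := by
          simp only [Finset.mem_sdiff, Finset.mem_union] at hw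
          tauto
        have hsplit' := card_split [w] F (by simp) (by simpa using hwF)
        simp only [List.length_nil, List.length_cons] at hsplit hsplit' hm
        apply ih [w] F (by simp) (List.isChain_singleton w) (by simpa using hwF)
        · intro f hf w' hw'
          rcases hinv f hf w' hw' with h | h
          · simp at h
          · exact Or.inr h
        · omega
        · simp only [List.length_cons, List.length_nil]
          omega
      | v :: rest =>
        by_cases hnb : ∃ w ∈ Finset.univ \ ((v :: rest).toFinset ∪ F), G.Adj v w
        · -- push
          obtain ⟨w, hwN, hadj⟩ := hnb
          have hwmem : w ∉ (v :: rest).toFinset ∧ w ∉ F := by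
            simp only [Finset.mem_sdiff, Finset.mem_union] at hwN
            tauto
          have hnd' : (w :: v :: rest).Nodup := by
            refine List.nodup_cons.mpr ⟨?_, hnd⟩
            intro hmem
            exact hwmem.1 (List.mem_toFinset.mpr hmem)
          have hdF' : ∀ u ∈ w :: v :: rest, u ∉ F := by
            intro u hu
            rcases List.mem_cons.mp hu with h | h
            · subst h; exact hwmem.2
            · exact hdF u h
          have hsplit' := card_split (w :: v :: rest) F hnd' hdF'
          simp only [List.length_cons] at hsplit hsplit' hm
          apply ih (w :: v :: rest) F hnd'
            (List.isChain_cons_cons.mpr ⟨hadj.symm, hch⟩) hdF'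
          · intro f hf w' hw'
            rcases hinv f hf w' hw' with h | h
            · exact Or.inl (List.mem_cons_of_mem _ h)
            · exact Or.inr h
          · omega
          · simp only [List.length_cons]
            omega
        · -- pop
          push_neg at hnb
          have hNeq : Finset.univ \ (rest.toFinset ∪ insert v F) =
              Finset.univ \ ((v :: rest).toFinset ∪ F) := by
            ext x
            simp only [Finset.mem_sdiff, Finset.mem_union, Finset.mem_insert,
              List.toFinset_cons, Finset.mem_insert]
            tauto
          have hnd' : rest.Nodup := (List.nodup_cons.mp hnd).2
          have hdF' : ∀ u ∈ rest, u ∉ insert v F := by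
            intro u hu hmem
            rcases Finset.mem_insert.mp hmem with h | h
            · subst h; exact (List.nodup_cons.mp hnd).1 hu
            · exact hdF u (List.mem_cons_of_mem _ hu) h
          apply ih rest (insert v F) hnd' hch.tail hdF'
          · intro f hf w' hw'
            rcases Finset.mem_insert.mp hf with h | h
            · subst h
              have hw'N : w' ∉ Finset.univ \ ((f :: rest).toFinset ∪ F) :=
                fun hmem => hnb w' hmem hw'
              have hw'' : w' ∈ (f :: rest).toFinset ∪ F := by
                by_contra hcon
                exact hw'N (Finset.mem_sdiff.mpr ⟨Finset.mem_univ _, hcon⟩)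
              rcases Finset.mem_union.mp hw'' with h | h
              · rcases List.mem_cons.mp (List.mem_toFinset.mp h) with h | h
                · exact absurd (h ▸ hw') (G.loopless.irrefl f)
                · exact Or.inl h
              · exact Or.inr (Finset.mem_insert_of_mem h)
            · rcases hinv f h w' hw' with h2 | h2
              · rcases List.mem_cons.mp h2 with h2 | h2
                · exact Or.inr (h2 ▸ Finset.mem_insert_self _ _)
                · exact Or.inl h2
              · exact Or.inr (Finset.mem_insert_of_mem h2)
          · rw [hNeq]; exact hN
          · rw [hNeq]
            simp only [List.length_cons] at hm
            omega

/-- If a graph `G` on a finite vertex set is `k`-joined (`k ≥ 1`), then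
`G` contains a path (a sequence of distinct vertices with consecutive vertices adjacent)
with at least `v(G) - 2k` vertices. -/
theorem stmt_6 {V : Type*} [Fintype V] (G : SimpleGraph V) (k : ℕ) (hk : 0 < k)
    (hjoined : KJoined G k) :
    ∃ l : List V, l.Nodup ∧ l.Chain' G.Adj ∧ Fintype.card V - 2 * k ≤ l.length := by
  classical
  by_cases hc : k ≤ Fintype.card V
  · apply dfs_main G k hk hjoined (2 * Fintype.card V) [] ∅ (by simp) List.isChain_nil (by simp)
      (by simp)
    · simpa using hc
    · simp
  · exact ⟨[], by simp, List.isChain_nil, by omega⟩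
end

section
/- Let r ≥ 2 be an integer, let n be sufficiently large, let b be an integer with 1 ≤ b ≤ 2^{-10} r^{-2} n, and set t = 2^5 r b and α = (r+1)/(2r). Let G be a graph on n vertices with minimum degree δ(G) ≥ αn and let χ be an r-colouring of E(G). Then there exist a colour c* ∈ {1,…,r} and a cycle F ⊆ G with exactly t+1 edges such that all edges of F except two consecutive edges have colour c*. -/
open SimpleGraph
open scoped Classical

/-- The subgraph of `G` consisting of edges of colour `c`. -/
def colSub {n r : ℕ} (G : SimpleGraph (Fin n)) (χ : Sym2 (Fin n) → Fin r) (c : Fin r) :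
    SimpleGraph (Fin n) where
  Adj u w := G.Adj u w ∧ χ s(u, w) = c
  symm := by
    refine ⟨fun u w h => ?_⟩
    exact ⟨h.1.symm, by rw [Sym2.eq_swap]; exact h.2⟩
  loopless := ⟨fun u h => G.irrefl h.1⟩

/-- Greedy construction of a path in a graph with min degree `d` inside `S`. -/
lemma greedy_path {V : Type*} [Fintype V] [DecidableEq V] (H : SimpleGraph V)
    [DecidableRel H.Adj] (S : Finset V) (d : ℕ) (hS : S.Nonempty)
    (hdeg : ∀ v ∈ S, d ≤ (H.neighborFinset v ∩ S).card) :
    ∀ k ≤ d, ∃ l : List V, l.length = k + 1 ∧ l.Nodup ∧ l.Chain' H.Adj ∧ ∀ x ∈ l, x ∈ S := by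
  intro k hk
  induction k with
  | zero =>
    obtain ⟨x, hx⟩ := hS
    exact ⟨[x], rfl, List.nodup_singleton x, List.isChain_singleton x, by simpa using hx⟩
  | succ k ih =>
    obtain ⟨l, hlen, hnd, hch, hmem⟩ := ih (Nat.le_of_succ_le hk)
    have hne : l ≠ [] := by intro h; simp [h] at hlen
    set y := l.getLast hne with hy
    have hyS : y ∈ S := hmem y (List.getLast_mem hne)
    have : ∃ x ∈ H.neighborFinset y ∩ S, x ∉ l := by
      by_contra hcon
      push_neg at hcon
      have hsub : H.neighborFinset y ∩ S ⊆ l.toFinset.erase y := by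
        intro x hx
        have hxl : x ∈ l.toFinset := List.mem_toFinset.2 (hcon x hx)
        have hxy : x ≠ y := by
          rintro rfl
          have := (Finset.mem_inter.1 hx).1
          rw [SimpleGraph.mem_neighborFinset] at this
          exact H.irrefl this
        exact Finset.mem_erase.2 ⟨hxy, hxl⟩
      have h1 : (H.neighborFinset y ∩ S).card ≤ (l.toFinset.erase y).card :=
        Finset.card_le_card hsub
      have h2 : (l.toFinset.erase y).card = l.toFinset.card - 1 :=
        Finset.card_erase_of_mem (List.mem_toFinset.2 (List.getLast_mem hne))
      have h3 : l.toFinset.card ≤ l.length := l.toFinset_card_le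
      have h4 := hdeg y hyS
      omega
    obtain ⟨x, hx, hxl⟩ := this
    refine ⟨l ++ [x], by simp [hlen], ?_, ?_, ?_⟩
    · simp only [List.nodup_append, List.nodup_singleton]
      refine ⟨hnd, trivial, ?_⟩
      intro a ha b hb; simp at hb; subst hb; exact fun h => hxl (h ▸ ha)
    · show List.IsChain _ _; rw [List.isChain_append]
      refine ⟨hch, List.isChain_singleton x, ?_⟩
      intro a ha b hb
      rw [List.getLast?_eq_getLast hne] at ha
      simp at ha hb
      subst ha; subst hb
      simpa using (Finset.mem_inter.1 hx).1
    · intro z hz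
      rcases List.mem_append.1 hz with h | h
      · exact hmem z h
      · simp at h; subst h; exact (Finset.mem_inter.1 hx).2

lemma degsum_erase {V : Type*} [Fintype V] [DecidableEq V] (H : SimpleGraph V)
    [DecidableRel H.Adj] (S : Finset V) (v : V) (hv : v ∈ S) :
    ∑ u ∈ S, (H.neighborFinset u ∩ S).card ≤
      (∑ u ∈ S.erase v, (H.neighborFinset u ∩ S.erase v).card)
        + 2 * (H.neighborFinset v ∩ S).card := by
  rw [← Finset.sum_erase_add _ _ hv]
  have key : ∀ u ∈ S.erase v, (H.neighborFinset u ∩ S).card ≤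
      (H.neighborFinset u ∩ S.erase v).card + (if u ∈ H.neighborFinset v then 1 else 0) := by
    intro u hu
    have : H.neighborFinset u ∩ S.erase v = (H.neighborFinset u ∩ S).erase v := by
      ext x; simp [Finset.mem_erase, Finset.mem_inter]; tauto
    rw [this]
    by_cases hvu : v ∈ H.neighborFinset u ∩ S
    · rw [Finset.card_erase_of_mem hvu]
      have huv : u ∈ H.neighborFinset v := by
        have h1 := (Finset.mem_inter.1 hvu).1
        rw [SimpleGraph.mem_neighborFinset] at h1 ⊢
        exact h1.symm
      simp [huv]
      have : 1 ≤ (H.neighborFinset u ∩ S).card := Finset.card_pos.2 ⟨v, hvu⟩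
      omega
    · rw [Finset.erase_eq_of_notMem hvu]; split <;> omega
  calc ∑ u ∈ S.erase v, (H.neighborFinset u ∩ S).card + (H.neighborFinset v ∩ S).card
      ≤ (∑ u ∈ S.erase v, ((H.neighborFinset u ∩ S.erase v).card
          + (if u ∈ H.neighborFinset v then 1 else 0))) + (H.neighborFinset v ∩ S).card := by
        gcongr with u hu; exact key u hu
    _ = (∑ u ∈ S.erase v, (H.neighborFinset u ∩ S.erase v).card)
          + (∑ u ∈ S.erase v, if u ∈ H.neighborFinset v then 1 else 0)
          + (H.neighborFinset v ∩ S).card := by rw [Finset.sum_add_distrib]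
    _ ≤ _ := by
        have h1 : (∑ u ∈ S.erase v, if u ∈ H.neighborFinset v then 1 else 0)
            = ((S.erase v).filter (fun u => u ∈ H.neighborFinset v)).card := by
          rw [Finset.card_filter]
        have h2 : ((S.erase v).filter (fun u => u ∈ H.neighborFinset v)).card
            ≤ (H.neighborFinset v ∩ S).card := by
          apply Finset.card_le_card
          intro x hx
          rw [Finset.mem_filter] at hx
          rw [Finset.mem_inter]
          exact ⟨hx.2, (Finset.mem_erase.1 hx.1).2⟩
        omega

lemma exists_min_deg_sub {V : Type*} [Fintype V] [DecidableEq V] (H : SimpleGraph V)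
    [DecidableRel H.Adj] (d : ℕ) (S : Finset V)
    (hD : 2 * d * (S.card - 1) + 2 ≤ ∑ u ∈ S, (H.neighborFinset u ∩ S).card) :
    ∃ T ⊆ S, T.Nonempty ∧ ∀ v ∈ T, d ≤ (H.neighborFinset v ∩ T).card := by
  suffices key : ∀ m : ℕ, ∀ S : Finset V, S.card = m →
      2 * d * (S.card - 1) + 2 ≤ (∑ u ∈ S, (H.neighborFinset u ∩ S).card) →
      ∃ T ⊆ S, T.Nonempty ∧ ∀ v ∈ T, d ≤ (H.neighborFinset v ∩ T).card by
    exact key S.card S rfl hD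
  clear hD S
  intro m
  induction m using Nat.strong_induction_on with
  | _ m ih =>
  intro S hm hD
  have hS2 : 2 ≤ S.card := by
    by_contra h
    push_neg at h
    have hsum : ∑ u ∈ S, (H.neighborFinset u ∩ S).card = 0 := by
      apply Finset.sum_eq_zero
      intro u hu
      rw [Finset.card_eq_zero]
      ext x
      simp only [Finset.mem_inter, SimpleGraph.mem_neighborFinset, Finset.notMem_empty,
        iff_false, not_and]
      intro hadj hxS
      have hxu : x = u := Finset.card_le_one.1 (by omega) _ hxS _ hu
      exact H.irrefl (hxu ▸ hadj)
    omega
  by_cases hall : ∀ v ∈ S, d ≤ (H.neighborFinset v ∩ S).card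
  · exact ⟨S, le_refl _, Finset.card_pos.1 (by omega), hall⟩
  · push_neg at hall
    obtain ⟨v, hv, hdv⟩ := hall
    have hkey := degsum_erase H S v hv
    have hcard : (S.erase v).card = S.card - 1 := Finset.card_erase_of_mem hv
    have hD' : 2 * d * ((S.erase v).card - 1) + 2 ≤
        ∑ u ∈ S.erase v, (H.neighborFinset u ∩ S.erase v).card := by
      obtain ⟨e, he⟩ : ∃ e, S.card = e + 2 := ⟨S.card - 2, by omega⟩
      rw [hcard, he]
      rw [he] at hD
      have h1 : e + 2 - 1 = e + 1 := by omega
      have h2 : e + 2 - 1 - 1 = e := by omega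
      rw [h1] at hD
      rw [h2]
      have hmul : 2 * d * (e + 1) = 2 * d * e + 2 * d := by ring
      rw [hmul] at hD
      set X := 2 * d * e with hX
      omega
    have hS1 : 1 ≤ S.card := by omega
    obtain ⟨T, hTS, hTne, hT⟩ := ih (S.erase v).card (by omega) (S.erase v) rfl hD'
    exact ⟨T, hTS.trans (Finset.erase_subset _ _), hTne, hT⟩

set_option maxHeartbeats 1000000 in
/-- Let `r ≥ 2`. For all sufficiently large `n`, all `1 ≤ b ≤ 2⁻¹⁰ r⁻² n`
with `t = 2⁵ r b`, every graph `G` on `n` vertices with minimum degree at least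
`(r+1)n/(2r)` and every `r`-colouring `χ` contains a colour `c*` and a cycle
`F = [v 0, …, v t]` with exactly `t+1` edges such that all edges of `F` except the two
consecutive edges `v 0 v 1` and `v t v 0` have colour `c*`. -/
theorem stmt_13 (r : ℕ) (hr : 2 ≤ r) :
    ∃ N : ℕ, ∀ n ≥ N, ∀ b : ℕ, 1 ≤ b → (b : ℝ) ≤ 2⁻¹ ^ 10 * ((r : ℝ))⁻¹ ^ 2 * n →
      ∀ G : SimpleGraph (Fin n),
        (∀ u : Fin n, ((r : ℝ) + 1) / (2 * r) * n ≤ ((G.neighborSet u).ncard : ℝ)) →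
        ∀ χ : Sym2 (Fin n) → Fin r,
          ∃ (cstar : Fin r) (v : ℕ → Fin n),
            (∀ i ≤ 2 ^ 5 * r * b, ∀ j ≤ 2 ^ 5 * r * b, v i = v j → i = j) ∧
            (∀ i < 2 ^ 5 * r * b, G.Adj (v i) (v (i + 1))) ∧
            G.Adj (v (2 ^ 5 * r * b)) (v 0) ∧
            (∀ i, 1 ≤ i → i < 2 ^ 5 * r * b → χ s(v i, v (i + 1)) = cstar) := by
  refine ⟨2 ^ 20 * r ^ 2, ?_⟩
  intro n hn b hb1 hbn G hdeg χ
  set t := 2 ^ 5 * r * b with ht_def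
  -- basic positivity and cast facts
  have hr0 : (0 : ℝ) < r := by
    have : (0 : ℕ) < r := by omega
    exact_mod_cast this
  have hr2 : (2 : ℝ) ≤ r := by exact_mod_cast hr
  have hn20 : (2 : ℝ) ^ 20 * (r : ℝ) ^ 2 ≤ n := by exact_mod_cast hn
  have hn0 : (0 : ℝ) < n := lt_of_lt_of_le (by positivity) hn20
  have hnpos : 0 < n := by exact_mod_cast hn0
  have hb1' : (1 : ℝ) ≤ b := by exact_mod_cast hb1
  have hbR : 1024 * (r : ℝ) ^ 2 * b ≤ n := by
    have key : (1024 : ℝ) * (r : ℝ) ^ 2 * (2⁻¹ ^ 10 * ((r : ℝ))⁻¹ ^ 2 * n) = n := by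
      field_simp
      ring
    calc 1024 * (r : ℝ) ^ 2 * b ≤ 1024 * (r : ℝ) ^ 2 * (2⁻¹ ^ 10 * ((r : ℝ))⁻¹ ^ 2 * n) := by
          apply mul_le_mul_of_nonneg_left hbn (by positivity)
      _ = (n : ℝ) := key
  have htR : (t : ℝ) = 32 * (r : ℝ) * b := by rw [ht_def]; push_cast; ring
  have ht64 : 64 ≤ t := by
    have h1 : 2 ^ 5 * 2 * 1 ≤ 2 ^ 5 * r * b := Nat.mul_le_mul (Nat.mul_le_mul_left _ hr) hb1
    norm_num at h1
    exact h1
  -- degree hypothesis in Finset form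
  have hdegF : ∀ u, ((r : ℝ) + 1) / (2 * r) * n ≤ ((G.neighborFinset u).card : ℝ) := by
    intro u
    have h := hdeg u
    have heq : (G.neighborSet u).ncard = (G.neighborFinset u).card := by
      rw [SimpleGraph.neighborFinset_def, Set.ncard_eq_toFinset_card']
    rwa [heq] at h
  -- split degrees by colour
  have hsplit : ∀ u : Fin n, (G.neighborFinset u).card
      = ∑ c : Fin r, ((colSub G χ c).neighborFinset u).card := by
    intro u
    rw [Finset.card_eq_sum_card_fiberwise
      (f := fun w => χ s(u, w)) (t := Finset.univ) (fun x _ => Finset.mem_univ _)]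
    apply Finset.sum_congr rfl
    intro c _
    congr 1
    ext w
    simp only [Finset.mem_filter, SimpleGraph.mem_neighborFinset]
    constructor
    · rintro ⟨h1, h2⟩; exact ⟨h1, h2⟩
    · rintro ⟨h1, h2⟩; exact ⟨h1, h2⟩
  set D : Fin r → ℕ := fun c => ∑ u : Fin n, ((colSub G χ c).neighborFinset u).card with hD_def
  have hDsum : ∑ c : Fin r, D c = ∑ u : Fin n, (G.neighborFinset u).card := by
    rw [hD_def]
    rw [Finset.sum_comm]
    exact Finset.sum_congr rfl fun u _ => (hsplit u).symm
  -- pigeonhole: some colour has many edges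
  have hne : (Finset.univ : Finset (Fin r)).Nonempty := ⟨⟨0, by omega⟩, Finset.mem_univ _⟩
  obtain ⟨c, -, hc⟩ := Finset.exists_le_of_sum_le
    (f := fun _ : Fin r => ∑ u : Fin n, (G.neighborFinset u).card)
    (g := fun c => r * D c) hne (by
      rw [Finset.sum_const, ← Finset.mul_sum, hDsum]
      simp [Finset.card_univ])
  -- total degree lower bound
  have htot : (n : ℝ) * (((r : ℝ) + 1) / (2 * r) * n)
      ≤ ((∑ u : Fin n, (G.neighborFinset u).card : ℕ) : ℝ) := by
    push_cast
    calc (n : ℝ) * (((r : ℝ) + 1) / (2 * r) * n)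
        = ∑ _u : Fin n, ((r : ℝ) + 1) / (2 * r) * n := by
          rw [Finset.sum_const, Finset.card_univ, Fintype.card_fin, nsmul_eq_mul]
      _ ≤ ∑ u : Fin n, ((G.neighborFinset u).card : ℝ) :=
          Finset.sum_le_sum (fun u _ => hdegF u)
  have hc' : ((∑ u : Fin n, (G.neighborFinset u).card : ℕ) : ℝ) ≤ (r : ℝ) * D c := by
    exact_mod_cast hc
  have hDc : (n : ℝ) * (((r : ℝ) + 1) / (2 * r) * n) / r ≤ (D c : ℝ) := by
    rw [div_le_iff₀ hr0]
    calc (n : ℝ) * (((r : ℝ) + 1) / (2 * r) * n) ≤ (r : ℝ) * D c := le_trans htot hc'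
      _ = (D c : ℝ) * r := by ring
  -- numeric bound for the dense-subgraph extraction
  have hnumeric : 2 * t * (n - 1) + 2 ≤ D c := by
    have hcast1 : ((n - 1 : ℕ) : ℝ) ≤ (n : ℝ) := by
      have : (n - 1 : ℕ) ≤ n := Nat.sub_le n 1
      exact_mod_cast this
    have hstep1 : ((2 * t * (n - 1) + 2 : ℕ) : ℝ) ≤ 2 * (t : ℝ) * n + 2 := by
      push_cast
      have ht0 : (0 : ℝ) ≤ (t : ℝ) := by positivity
      nlinarith
    have hexp : (n : ℝ) * (((r : ℝ) + 1) / (2 * r) * n) / r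
        = ((r : ℝ) + 1) * (n : ℝ) ^ 2 / (2 * (r : ℝ) ^ 2) := by
      field_simp
    have hstep2 : 2 * (t : ℝ) * n + 2 ≤ (n : ℝ) * (((r : ℝ) + 1) / (2 * r) * n) / r := by
      rw [hexp, le_div_iff₀ (by positivity)]
      rw [htR]
      have key1 : 1024 * (r : ℝ) ^ 2 * b * n ≤ (n : ℝ) * n :=
        mul_le_mul_of_nonneg_right hbR hn0.le
      have key2 : (r : ℝ) * (1024 * (r : ℝ) ^ 2 * b * n) ≤ (r : ℝ) * ((n : ℝ) * n) :=
        mul_le_mul_of_nonneg_left key1 hr0.le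
      have key3 : (r : ℝ) * ((2:ℝ) ^ 20 * (r : ℝ) ^ 2) ≤ (r : ℝ) * n :=
        mul_le_mul_of_nonneg_left hn20 hr0.le
      have key4 : (r : ℝ) * n ≤ (n : ℝ) * n := by
        apply mul_le_mul_of_nonneg_right _ hn0.le
        nlinarith
      have key5 : 4 * (r : ℝ) ^ 2 ≤ 2 ^ 20 * (r : ℝ) ^ 3 := by nlinarith
      have key6 : 4 * (r : ℝ) ^ 2 ≤ (n : ℝ) ^ 2 := by nlinarith [key3, key4, key5]
      nlinarith [key2, key6, mul_nonneg hr0.le (sq_nonneg (n : ℝ))]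
    have : ((2 * t * (n - 1) + 2 : ℕ) : ℝ) ≤ (D c : ℝ) :=
      le_trans hstep1 (le_trans hstep2 hDc)
    exact_mod_cast this
  -- extract a subgraph of min degree t in colour c
  obtain ⟨T, hTsub, hTne, hTdeg⟩ := exists_min_deg_sub (colSub G χ c) t Finset.univ (by
    simp_rw [Finset.inter_univ]
    have hvu : (Finset.univ : Finset (Fin n)).card = n := by simp
    rw [hvu]
    exact hnumeric)
  -- greedy path of t vertices in colour c
  obtain ⟨l, hlen, hnd, hch, hmeml⟩ :=
    greedy_path (colSub G χ c) T t hTne hTdeg (t - 1) (Nat.sub_le t 1)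
  have hlen' : l.length = t := by omega
  set x0 : Fin n := ⟨0, hnpos⟩ with hx0
  set v1 : Fin n := l.getD 0 x0 with hv1
  set vt : Fin n := l.getD (t - 1) x0 with hvt
  -- common neighbourhood of the endpoints is large
  have hcn : (n : ℝ) / r ≤ ((G.neighborFinset v1 ∩ G.neighborFinset vt).card : ℝ) := by
    have h1 := hdegF v1
    have h2 := hdegF vt
    have hu := Finset.card_union_add_card_inter (G.neighborFinset v1) (G.neighborFinset vt)
    have hule : (G.neighborFinset v1 ∪ G.neighborFinset vt).card ≤ n := by
      calc (G.neighborFinset v1 ∪ G.neighborFinset vt).card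
          ≤ Fintype.card (Fin n) := Finset.card_le_univ _
        _ = n := Fintype.card_fin n
    have hu' : ((G.neighborFinset v1 ∪ G.neighborFinset vt).card : ℝ)
        + ((G.neighborFinset v1 ∩ G.neighborFinset vt).card : ℝ)
        = ((G.neighborFinset v1).card : ℝ) + ((G.neighborFinset vt).card : ℝ) := by
      exact_mod_cast hu
    have hule' : ((G.neighborFinset v1 ∪ G.neighborFinset vt).card : ℝ) ≤ n := by
      exact_mod_cast hule
    have heq : 2 * (((r : ℝ) + 1) / (2 * r) * n) - n = (n : ℝ) / r := by
      field_simp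
      ring
    linarith
  have ht1n : (t : ℝ) + 1 ≤ (n : ℝ) / r := by
    rw [le_div_iff₀ hr0, htR]
    have key5 : (992 : ℝ) * (r : ℝ) ^ 2 ≤ 992 * (r : ℝ) ^ 2 * b :=
      le_mul_of_one_le_right (by positivity) hb1'
    nlinarith
  have hAcard : t + 1 ≤ (G.neighborFinset v1 ∩ G.neighborFinset vt).card := by
    have : ((t : ℕ) : ℝ) + 1 ≤ ((G.neighborFinset v1 ∩ G.neighborFinset vt).card : ℝ) :=
      le_trans ht1n hcn
    exact_mod_cast this
  -- choose v0 in the common neighbourhood avoiding the path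
  have hex0 : ∃ v0 ∈ G.neighborFinset v1 ∩ G.neighborFinset vt, v0 ∉ l := by
    by_contra hcon
    push_neg at hcon
    have hsub : G.neighborFinset v1 ∩ G.neighborFinset vt ⊆ l.toFinset := fun x hx =>
      List.mem_toFinset.2 (hcon x hx)
    have h1 := Finset.card_le_card hsub
    have h2 : l.toFinset.card ≤ l.length := l.toFinset_card_le
    omega
  obtain ⟨v0, hv0AB, hv0l⟩ := hex0
  have hv0v1 : G.Adj v1 v0 := by
    have := (Finset.mem_inter.1 hv0AB).1
    rwa [SimpleGraph.mem_neighborFinset] at this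
  have hv0vt : G.Adj vt v0 := by
    have := (Finset.mem_inter.1 hv0AB).2
    rwa [SimpleGraph.mem_neighborFinset] at this
  -- assemble the cycle
  refine ⟨c, fun i => if i = 0 then v0 else l.getD (i - 1) x0, ?_, ?_, ?_, ?_⟩
  · -- injectivity
    intro i hi j hj hij
    simp only at hij
    rcases Nat.eq_zero_or_pos i with hi0 | hi0 <;> rcases Nat.eq_zero_or_pos j with hj0 | hj0
    · omega
    · subst hi0
      rw [if_pos rfl, if_neg (by omega)] at hij
      exfalso
      apply hv0l
      rw [hij]
      have hjlt : j - 1 < l.length := by omega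
      rw [List.getD_eq_getElem l x0 hjlt]
      exact List.getElem_mem hjlt
    · subst hj0
      rw [if_neg (by omega), if_pos rfl] at hij
      exfalso
      apply hv0l
      rw [← hij]
      have hilt : i - 1 < l.length := by omega
      rw [List.getD_eq_getElem l x0 hilt]
      exact List.getElem_mem hilt
    · rw [if_neg (by omega), if_neg (by omega)] at hij
      have hilt : i - 1 < l.length := by omega
      have hjlt : j - 1 < l.length := by omega
      rw [List.getD_eq_getElem l x0 hilt, List.getD_eq_getElem l x0 hjlt] at hij
      have := (hnd.getElem_inj_iff).1 hij
      omega
  · -- adjacency along the cycle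
    intro i hi
    rcases Nat.eq_zero_or_pos i with hi0 | hi0
    · subst hi0
      simp only [if_pos rfl, if_neg (by omega : ¬ (0 + 1 = 0))]
      exact hv0v1.symm
    · simp only [if_neg (by omega : ¬ i = 0), if_neg (by omega : ¬ (i + 1 = 0))]
      have h1 : i - 1 < l.length - 1 := by omega
      have hidx : i + 1 - 1 = i - 1 + 1 := by omega
      rw [hidx]
      have hi1 : i - 1 < l.length := by omega
      have hi2 : i - 1 + 1 < l.length := by omega
      rw [List.getD_eq_getElem l x0 hi1, List.getD_eq_getElem l x0 hi2]
      have hR := (List.isChain_iff_getElem.1 hch) (i - 1) (by omega)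
      have hadj : (colSub G χ c).Adj (l.get ⟨i - 1, by omega⟩) (l.get ⟨i - 1 + 1, by omega⟩) := hR
      have hG : G.Adj (l.get ⟨i - 1, by omega⟩) (l.get ⟨i - 1 + 1, by omega⟩) := hadj.1
      simp only [List.get_eq_getElem] at hG
      exact hG
  · -- closing edge
    simp only [if_neg (by omega : ¬ t = 0), if_pos rfl]
    exact hv0vt
  · -- colours
    intro i hi1 hit
    simp only [if_neg (by omega : ¬ i = 0), if_neg (by omega : ¬ (i + 1 = 0))]
    have h1 : i - 1 < l.length - 1 := by omega
    have hidx : i + 1 - 1 = i - 1 + 1 := by omega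
    rw [hidx]
    have hi1' : i - 1 < l.length := by omega
    have hi2 : i - 1 + 1 < l.length := by omega
    rw [List.getD_eq_getElem l x0 hi1', List.getD_eq_getElem l x0 hi2]
    have hR := (List.isChain_iff_getElem.1 hch) (i - 1) (by omega)
    have hadj : (colSub G χ c).Adj (l.get ⟨i - 1, by omega⟩) (l.get ⟨i - 1 + 1, by omega⟩) := hR
    have hcol := hadj.2
    simp only [List.get_eq_getElem] at hcol
    exact hcol
end

section
/- Let r ≥ 2 be an integer, let n be sufficiently large, let b be an integer with 1 ≤ b ≤ 2^{-10} r^{-2} n, and set t = 2^5 r b, s = 8rb and α = (r+1)/(2r). Let G be a graph on n vertices with minimum degree δ(G) ≥ αn and let χ be an r-colouring of E(G) such that for each colour c ∈ {1,…,r} and each vertex v there exists a matching in G[N(v)] with at least 2^9 r b edges none of which has colour c. If c ∈ {1,…,r} is a colour with |X_c| ≥ s/4, then G contains at least s/4 pairwise vertex-disjoint bowties of c-type I. -/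
open SimpleGraph
open scoped Classical

/-- `M` is a matching in `G`: a set of pairwise vertex-disjoint edges of `G`. -/
def MatchingIn {V : Type*} (M : Finset (Sym2 V)) (G : SimpleGraph V) : Prop :=
  (∀ e ∈ M, e ∈ G.edgeSet) ∧
  ∀ e ∈ M, ∀ f ∈ M, e ≠ f → ∀ v : V, ¬(v ∈ e ∧ v ∈ f)

/-- `X_c`: the set of vertices `v` such that every matching in `G(v,c)` (the graph on
`N(v)` consisting of the edges of `G[N(v)]` not having both endpoints in `N_c(v)`) has
fewer than `8t` edges. -/
def Xset {n r : ℕ} (G : SimpleGraph (Fin n)) (χ : Sym2 (Fin n) → Fin r) (c : Fin r)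
    (t : ℕ) : Set (Fin n) :=
  {v | ∀ M : Finset (Sym2 (Fin n)), MatchingIn M G →
    (∀ e ∈ M, ∀ w ∈ e, G.Adj v w) →
    (∀ e ∈ M, ¬ ∀ w ∈ e, χ s(v, w) = c) →
    M.card < 8 * t}

/-- `z, a, b, d, e` form a bowtie in `G` with center `z`: two triangles `z a b` and
`z d e` meeting exactly at `z`. -/
def IsBowtie {V : Type*} (G : SimpleGraph V) (z a b d e : V) : Prop :=
  G.Adj z a ∧ G.Adj z b ∧ G.Adj a b ∧ G.Adj z d ∧ G.Adj z e ∧ G.Adj d e ∧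
  ([z, a, b, d, e] : List V).Nodup

/-- A bowtie of `c`-type I: all four center-edges have colour `c` and the two
side-edges have distinct colours. -/
def IsBowtieTypeI {V : Type*} {r : ℕ} (G : SimpleGraph V) (χ : Sym2 V → Fin r)
    (c : Fin r) (z a b d e : V) : Prop :=
  IsBowtie G z a b d e ∧
  χ s(z, a) = c ∧ χ s(z, b) = c ∧ χ s(z, d) = c ∧ χ s(z, e) = c ∧
  χ s(a, b) ≠ χ s(d, e)

lemma sym2_exists_eq {α : Type*} (e : Sym2 α) : ∃ x y, e = s(x, y) := by
  induction e using Sym2.ind with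
  | _ x y => exact ⟨x, y, rfl⟩

lemma card_quad_le {α : Type*} [DecidableEq α] (x y z w : α) :
    ({x, y, z, w} : Finset α).card ≤ 4 := by
  apply le_trans (Finset.card_insert_le _ _)
  have := Finset.card_insert_le y ({z, w} : Finset α)
  have := Finset.card_insert_le z ({w} : Finset α)
  simp only [Finset.card_singleton] at *
  omega

/-- A set of pairwise vertex-disjoint edges each meeting `T` has at most `|T|` edges. -/
lemma matching_meet_card_le {V : Type*} [DecidableEq V] (F : Finset (Sym2 V))
    (hM : ∀ e ∈ F, ∀ f ∈ F, e ≠ f → ∀ v : V, ¬(v ∈ e ∧ v ∈ f)) (T : Finset V)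
    (hF : ∀ e ∈ F, ∃ w, w ∈ e ∧ w ∈ T) : F.card ≤ T.card := by
  classical
  set f : Sym2 V → V := fun e => if h : ∃ w, w ∈ e ∧ w ∈ T then h.choose else (Quot.out e).1
    with hf
  apply Finset.card_le_card_of_injOn f
  · intro e he
    have h := hF e he
    simp only [hf, dif_pos h]
    exact h.choose_spec.2
  · intro e1 h1 e2 h2 heq
    by_contra hne12
    have hh1 := hF e1 h1
    have hh2 := hF e2 h2
    simp only [hf, dif_pos hh1, dif_pos hh2] at heq
    exact hM e1 h1 e2 h2 hne12 hh1.choose ⟨hh1.choose_spec.1, heq ▸ hh2.choose_spec.1⟩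

/-- From the colour-`c''` matching hypothesis at `v ∈ X_c`, extract a matching of ≥ 3
triangle-edges at `v`, all with both `v`-edges coloured `c`, avoiding `S ∪ {v}`,
and with side colour `≠ c''`. -/
lemma good_matching {n r b : ℕ} (hr : 2 ≤ r) (hb : 1 ≤ b) {G : SimpleGraph (Fin n)}
    {χ : Sym2 (Fin n) → Fin r} {c : Fin r} {v : Fin n}
    (hv : v ∈ Xset G χ c (2 ^ 5 * r * b)) {c'' : Fin r}
    (Hm : ∃ M : Finset (Sym2 (Fin n)), MatchingIn M G ∧
      (∀ e ∈ M, ∀ w ∈ e, G.Adj v w) ∧ (∀ e ∈ M, χ e ≠ c'') ∧ 2 ^ 9 * r * b ≤ M.card)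
    (S : Finset (Fin n)) (hS : S.card ≤ 12 * r * b) :
    ∃ M2 : Finset (Sym2 (Fin n)),
      (∀ e ∈ M2, e ∈ G.edgeSet) ∧
      (∀ e ∈ M2, ∀ f ∈ M2, e ≠ f → ∀ w : Fin n, ¬(w ∈ e ∧ w ∈ f)) ∧
      (∀ e ∈ M2, ∀ w ∈ e, G.Adj v w ∧ χ s(v, w) = c ∧ w ∉ S ∧ w ≠ v) ∧
      (∀ e ∈ M2, χ e ≠ c'') ∧ 3 ≤ M2.card := by
  classical
  obtain ⟨M, ⟨hMe, hMd⟩, hadj, hcol, hcard⟩ := Hm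
  set P : Sym2 (Fin n) → Prop := fun e => ∀ w ∈ e, χ s(v, w) = c with hP
  set Mbad := M.filter (fun e => ¬ P e) with hMbad
  have hbad : Mbad.card < 8 * (2 ^ 5 * r * b) := by
    apply hv Mbad
    · exact ⟨fun e he => hMe e (Finset.mem_of_mem_filter _ he),
        fun e he f hf => hMd e (Finset.mem_of_mem_filter _ he) f (Finset.mem_of_mem_filter _ hf)⟩
    · exact fun e he => hadj e (Finset.mem_of_mem_filter _ he)
    · exact fun e he => (Finset.mem_filter.mp he).2
  set M1 := M.filter P with hM1
  have hsplit : M1.card + Mbad.card = M.card := Finset.card_filter_add_card_filter_not _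
  have hM1card : 2 ^ 8 * (r * b) ≤ M1.card := by
    have e2 : 8 * (2 ^ 5 * r * b) = 2 ^ 8 * (r * b) := by ring
    have e3 : 2 ^ 9 * r * b = 2 ^ 9 * (r * b) := by ring
    rw [e2] at hbad; rw [e3] at hcard
    generalize r * b = q at hbad hcard ⊢
    omega
  set Q : Sym2 (Fin n) → Prop := fun e => ∀ w ∈ e, w ∉ S ∧ w ≠ v with hQ
  set M2 := M1.filter Q with hM2
  refine ⟨M2, ?_, ?_, ?_, ?_, ?_⟩
  · exact fun e he => hMe e (Finset.mem_of_mem_filter _ (Finset.mem_of_mem_filter _ he))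
  · exact fun e he f hf => hMd e (Finset.mem_of_mem_filter _ (Finset.mem_of_mem_filter _ he))
      f (Finset.mem_of_mem_filter _ (Finset.mem_of_mem_filter _ hf))
  · intro e he w hw
    have h1 := (Finset.mem_filter.mp he).2
    have he1 := Finset.mem_of_mem_filter _ he
    have h2 := (Finset.mem_filter.mp he1).2
    have heM := Finset.mem_of_mem_filter _ he1
    exact ⟨hadj e heM w hw, h2 w hw, (h1 w hw).1, (h1 w hw).2⟩
  · exact fun e he => hcol e
      (Finset.mem_of_mem_filter _ (Finset.mem_of_mem_filter _ he))
  · -- count edges of M1 meeting insert v S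
    have hcnt : (M1.filter (fun e => ¬ Q e)).card ≤ (insert v S).card := by
      apply matching_meet_card_le _
        (fun e he f hf => hMd e (Finset.mem_of_mem_filter _ (Finset.mem_of_mem_filter _ he))
          f (Finset.mem_of_mem_filter _ (Finset.mem_of_mem_filter _ hf))) (insert v S)
      intro e he
      have h := (Finset.mem_filter.mp he).2
      simp only [hQ, not_forall] at h
      obtain ⟨w, hw, hws⟩ := h
      refine ⟨w, hw, ?_⟩
      rw [Finset.mem_insert]
      by_cases h : w ∈ S
      · exact Or.inr h
      · exact Or.inl (by tauto)
    have hins : (insert v S).card ≤ 12 * r * b + 1 := by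
      have := Finset.card_insert_le v S
      omega
    have hsplit2 : M2.card + (M1.filter (fun e => ¬ Q e)).card = M1.card :=
      Finset.card_filter_add_card_filter_not _
    have hbadcard : (M1.filter (fun e => ¬ Q e)).card ≤ 12 * r * b + 1 :=
      le_trans hcnt hins
    have hq : 2 ≤ r * b := le_trans (by norm_num) (Nat.mul_le_mul hr hb)
    have e4 : 12 * r * b = 12 * (r * b) := by ring
    rw [e4] at hbadcard
    generalize r * b = q at hM1card hbadcard hq hsplit2 ⊢
    omega

/-- Any vertex of `X_c` has a `c`-type-I bowtie centered at it avoiding a given small set. -/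
lemma one_bowtie {n r b : ℕ} (hr : 2 ≤ r) (hb : 1 ≤ b) {G : SimpleGraph (Fin n)}
    {χ : Sym2 (Fin n) → Fin r}
    (Hmatch : ∀ (c : Fin r) (v : Fin n), ∃ M : Finset (Sym2 (Fin n)), MatchingIn M G ∧
      (∀ e ∈ M, ∀ w ∈ e, G.Adj v w) ∧ (∀ e ∈ M, χ e ≠ c) ∧ 2 ^ 9 * r * b ≤ M.card)
    {c : Fin r} {v : Fin n} (hv : v ∈ Xset G χ c (2 ^ 5 * r * b))
    (S : Finset (Fin n)) (hS : S.card ≤ 12 * r * b) :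
    ∃ a b' d e : Fin n, IsBowtieTypeI G χ c v a b' d e ∧
      (a ∉ S ∧ b' ∉ S ∧ d ∉ S ∧ e ∉ S) ∧
      (a ≠ v ∧ b' ≠ v ∧ d ≠ v ∧ e ≠ v) := by
  classical
  obtain ⟨M2, hedge, hdisj, hprop, hcol, hcard⟩ := good_matching hr hb hv (Hmatch c v) S hS
  -- two distinct edges of M2
  obtain ⟨E1, hE1, E2, hE2, hne⟩ := Finset.one_lt_card.mp (by omega : 1 < M2.card)
  obtain ⟨a, b', rfl⟩ := sym2_exists_eq E1
  have hmema : a ∈ s(a, b') := by simp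
  have hmemb : b' ∈ s(a, b') := by simp
  have hab : G.Adj a b' := (SimpleGraph.mem_edgeSet G).mp (hedge _ hE1)
  have hpa := hprop _ hE1 a hmema
  have hpb := hprop _ hE1 b' hmemb
  -- a helper to finish given a second suitable edge s(d,e)
  have finish : ∀ d e : Fin n, G.Adj d e →
      G.Adj v d → χ s(v, d) = c → d ∉ S → d ≠ v →
      G.Adj v e → χ s(v, e) = c → e ∉ S → e ≠ v →
      d ≠ a → d ≠ b' → e ≠ a → e ≠ b' →
      χ s(a, b') ≠ χ s(d, e) →
      ∃ a0 b0 d0 e0 : Fin n, IsBowtieTypeI G χ c v a0 b0 d0 e0 ∧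
        (a0 ∉ S ∧ b0 ∉ S ∧ d0 ∉ S ∧ e0 ∉ S) ∧
        (a0 ≠ v ∧ b0 ≠ v ∧ d0 ≠ v ∧ e0 ≠ v) := by
    intro d e hde hvd hcd hdS hdv hve hce heS hev hda hdb hea heb hside
    refine ⟨a, b', d, e, ⟨⟨hpa.1, hpb.1, hab, hvd, hve, hde, ?_⟩,
      hpa.2.1, hpb.2.1, hcd, hce, hside⟩,
      ⟨hpa.2.2.1, hpb.2.2.1, hdS, heS⟩, ⟨hpa.2.2.2, hpb.2.2.2, hdv, hev⟩⟩
    simp only [List.nodup_cons, List.mem_cons, List.mem_singleton, List.not_mem_nil,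
      or_false, List.nodup_nil, and_true, not_or]
    exact ⟨⟨Ne.symm hpa.2.2.2, Ne.symm hpb.2.2.2, Ne.symm hdv, Ne.symm hev⟩,
      ⟨hab.ne, Ne.symm hda, Ne.symm hea⟩, ⟨Ne.symm hdb, Ne.symm heb⟩, hde.ne, not_false⟩
  by_cases hcc : χ s(a, b') = χ E2
  · -- all side colours might be equal; find an edge of colour ≠ χ E1 via Hmatch for c'
    obtain ⟨M2', hedge', hdisj', hprop', hcol', hcard'⟩ :=
      good_matching hr hb hv (Hmatch (χ s(a, b')) v) S hS
    -- find f ∈ M2' avoiding {a, b'}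
    have hmeet : (M2'.filter (fun e => ∃ w ∈ e, w ∈ ({a, b'} : Finset (Fin n)))).card ≤ 2 := by
      have := matching_meet_card_le (M2'.filter (fun e => ∃ w ∈ e, w ∈ ({a, b'} : Finset (Fin n))))
        (fun e he f hf => hdisj' e (Finset.mem_of_mem_filter _ he) f (Finset.mem_of_mem_filter _ hf))
        ({a, b'} : Finset (Fin n))
        (fun e he => by
          obtain ⟨w, hw1, hw2⟩ := (Finset.mem_filter.mp he).2; exact ⟨w, hw1, hw2⟩)
      have h2 : ({a, b'} : Finset (Fin n)).card ≤ 2 := by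
        apply le_trans (Finset.card_insert_le _ _); simp
      omega
    have hsplit : (M2'.filter (fun e => ∃ w ∈ e, w ∈ ({a, b'} : Finset (Fin n)))).card
        + (M2'.filter (fun e => ¬ ∃ w ∈ e, w ∈ ({a, b'} : Finset (Fin n)))).card = M2'.card :=
      Finset.card_filter_add_card_filter_not _
    have : 0 < (M2'.filter (fun e => ¬ ∃ w ∈ e, w ∈ ({a, b'} : Finset (Fin n)))).card := by omega
    obtain ⟨f, hf⟩ := Finset.card_pos.mp this
    have hfM := Finset.mem_of_mem_filter _ hf
    have hfav := (Finset.mem_filter.mp hf).2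
    obtain ⟨d, e, rfl⟩ := sym2_exists_eq f
    have hmd : d ∈ s(d, e) := by simp
    have hme : e ∈ s(d, e) := by simp
    have hpd := hprop' _ hfM d hmd
    have hpe := hprop' _ hfM e hme
    have hde : G.Adj d e := (SimpleGraph.mem_edgeSet G).mp (hedge' _ hfM)
    have hda : d ≠ a := fun h => hfav ⟨d, hmd, by simp [h]⟩
    have hdb : d ≠ b' := fun h => hfav ⟨d, hmd, by simp [h]⟩
    have hea : e ≠ a := fun h => hfav ⟨e, hme, by simp [h]⟩
    have heb : e ≠ b' := fun h => hfav ⟨e, hme, by simp [h]⟩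
    exact finish d e hde hpd.1 hpd.2.1 hpd.2.2.1 hpd.2.2.2
      hpe.1 hpe.2.1 hpe.2.2.1 hpe.2.2.2 hda hdb hea heb (Ne.symm (hcol' _ hfM))
  · -- E1, E2 already have distinct side colours
    obtain ⟨d, e, rfl⟩ := sym2_exists_eq E2
    have hmd : d ∈ s(d, e) := by simp
    have hme : e ∈ s(d, e) := by simp
    have hpd := hprop _ hE2 d hmd
    have hpe := hprop _ hE2 e hme
    have hde : G.Adj d e := (SimpleGraph.mem_edgeSet G).mp (hedge _ hE2)
    have hdisj12 := hdisj _ hE1 _ hE2 hne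
    have hda : d ≠ a := fun h => hdisj12 d ⟨by simp [h], hmd⟩
    have hdb : d ≠ b' := fun h => hdisj12 d ⟨by simp [h], hmd⟩
    have hea : e ≠ a := fun h => hdisj12 e ⟨by simp [h], hme⟩
    have heb : e ≠ b' := fun h => hdisj12 e ⟨by simp [h], hme⟩
    exact finish d e hde hpd.1 hpd.2.1 hpd.2.2.1 hpd.2.2.2
      hpe.1 hpe.2.1 hpe.2.2.1 hpe.2.2.2 hda hdb hea heb hcc

/-- Let `r ≥ 2`. For all sufficiently large `n`, all
`1 ≤ b ≤ 2⁻¹⁰ r⁻² n`, with `t = 2⁵ r b` and `s = 8 r b`: let `G` be a graph on `n`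
vertices with minimum degree at least `(r+1)n/(2r)` and `χ` an `r`-colouring such that
for each colour `c` and vertex `v` there is a matching in `G[N(v)]` with at least
`2⁹ r b` edges none of colour `c`. If `|X_c| ≥ s/4` for some colour `c`, then `G`
contains at least `s/4 = 2rb` pairwise vertex-disjoint bowties of `c`-type I. -/
theorem stmt_15 (r : ℕ) (hr : 2 ≤ r) :
    ∃ N : ℕ, ∀ n ≥ N, ∀ b : ℕ, 1 ≤ b → (b : ℝ) ≤ 2⁻¹ ^ 10 * ((r : ℝ))⁻¹ ^ 2 * n →
      ∀ G : SimpleGraph (Fin n),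
        (∀ u : Fin n, ((r : ℝ) + 1) / (2 * r) * n ≤ ((G.neighborSet u).ncard : ℝ)) →
        ∀ χ : Sym2 (Fin n) → Fin r,
          (∀ (c : Fin r) (v : Fin n), ∃ M : Finset (Sym2 (Fin n)), MatchingIn M G ∧
            (∀ e ∈ M, ∀ w ∈ e, G.Adj v w) ∧ (∀ e ∈ M, χ e ≠ c) ∧ 2 ^ 9 * r * b ≤ M.card) →
          ∀ c : Fin r,
            ((8 * r * b : ℕ) : ℝ) / 4 ≤ ((Xset G χ c (2 ^ 5 * r * b)).ncard : ℝ) →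
            ∃ z a b' d e : Fin (2 * r * b) → Fin n,
              (∀ i, IsBowtieTypeI G χ c (z i) (a i) (b' i) (d i) (e i)) ∧
              ∀ i j, i ≠ j →
                Disjoint ({z i, a i, b' i, d i, e i} : Finset (Fin n))
                  ({z j, a j, b' j, d j, e j} : Finset (Fin n)) := by
  classical
  refine ⟨0, ?_⟩
  intro n _ b hb1 _ G _ χ Hmatch c hX
  have hq : 2 ≤ r * b := le_trans (by norm_num) (Nat.mul_le_mul hr hb1)
  have hX' : 2 * r * b ≤ (Xset G χ c (2 ^ 5 * r * b)).ncard := by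
    have h : ((2 * r * b : ℕ) : ℝ) ≤ ((Xset G χ c (2 ^ 5 * r * b)).ncard : ℝ) := by
      push_cast at hX ⊢
      linarith
    exact_mod_cast h
  have hfin : (Xset G χ c (2 ^ 5 * r * b)).toFinset.card
      = (Xset G χ c (2 ^ 5 * r * b)).ncard := (Set.ncard_eq_toFinset_card' _).symm
  obtain ⟨tf, htsub, htcard⟩ :=
    Finset.exists_subset_card_eq (le_trans hX' hfin.ge)
  set v : Fin (2 * r * b) → Fin n := fun i => ((tf.orderIsoOfFin htcard) i : Fin n) with hvdef
  have hvinj : Function.Injective v :=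
    fun i j h => (tf.orderIsoOfFin htcard).injective (Subtype.ext h)
  have hvX : ∀ i, v i ∈ Xset G χ c (2 ^ 5 * r * b) := by
    intro i
    have h1 : v i ∈ tf := ((tf.orderIsoOfFin htcard) i).2
    have h2 := htsub h1
    simpa using h2
  have main : ∀ k : ℕ, k ≤ 2 * r * b → ∃ a b' d e : Fin (2 * r * b) → Fin n,
      (∀ i : Fin (2 * r * b), (i : ℕ) < k →
        IsBowtieTypeI G χ c (v i) (a i) (b' i) (d i) (e i) ∧
        (∀ j : Fin (2 * r * b), a i ≠ v j ∧ b' i ≠ v j ∧ d i ≠ v j ∧ e i ≠ v j)) ∧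
      (∀ i i' : Fin (2 * r * b), (i : ℕ) < k → (i' : ℕ) < k → i ≠ i' →
        Disjoint ({a i, b' i, d i, e i} : Finset (Fin n))
          ({a i', b' i', d i', e i'} : Finset (Fin n))) := by
    intro k
    induction k with
    | zero =>
      intro _
      exact ⟨v, v, v, v, fun i h => absurd h (by omega), fun i i' h => absurd h (by omega)⟩
    | succ k ih =>
      intro hk1
      obtain ⟨a, b', d, e, H1, H2⟩ := ih (by omega)
      have hik : k < 2 * r * b := by omega
      set ik : Fin (2 * r * b) := ⟨k, hik⟩ with hikdef
      set S : Finset (Fin n) :=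
        ((Finset.univ.image v).erase (v ik)) ∪
          (Finset.univ.filter (fun i : Fin (2 * r * b) => (i : ℕ) < k)).biUnion
            (fun i => {a i, b' i, d i, e i}) with hSdef
      have hvS : ∀ j, j ≠ ik → v j ∈ S := by
        intro j hj
        apply Finset.mem_union_left
        exact Finset.mem_erase.mpr ⟨fun h => hj (hvinj h), Finset.mem_image_of_mem v (Finset.mem_univ j)⟩
      have holdsub : ∀ i' : Fin (2 * r * b), (i' : ℕ) < k →
          ({a i', b' i', d i', e i'} : Finset (Fin n)) ⊆ S := by
        intro i' hi' x hx
        apply Finset.mem_union_right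
        exact Finset.mem_biUnion.mpr ⟨i', Finset.mem_filter.mpr ⟨Finset.mem_univ _, hi'⟩, hx⟩
      have hScard : S.card ≤ 12 * r * b := by
        have h1 : ((Finset.univ.image v).erase (v ik)).card ≤ 2 * r * b := by
          refine le_trans (Finset.card_erase_le) (le_trans Finset.card_image_le ?_)
          simp
        have h2 : ((Finset.univ.filter (fun i : Fin (2 * r * b) => (i : ℕ) < k)).biUnion
            (fun i => ({a i, b' i, d i, e i} : Finset (Fin n)))).card ≤ (2 * r * b) * 4 := by
          refine le_trans Finset.card_biUnion_le ?_
          calc ∑ i ∈ Finset.univ.filter (fun i : Fin (2 * r * b) => (i : ℕ) < k),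
                ({a i, b' i, d i, e i} : Finset (Fin n)).card
              ≤ ∑ _i ∈ Finset.univ.filter (fun i : Fin (2 * r * b) => (i : ℕ) < k), 4 :=
                Finset.sum_le_sum (fun i _ => card_quad_le _ _ _ _)
            _ = (Finset.univ.filter (fun i : Fin (2 * r * b) => (i : ℕ) < k)).card * 4 := by
                rw [Finset.sum_const, smul_eq_mul]
            _ ≤ (2 * r * b) * 4 := by
                have : (Finset.univ.filter (fun i : Fin (2 * r * b) => (i : ℕ) < k)).card
                    ≤ (Finset.univ : Finset (Fin (2 * r * b))).card := Finset.card_filter_le _ _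
                simp only [Finset.card_univ, Fintype.card_fin] at this
                omega
        have h3 := Finset.card_union_le ((Finset.univ.image v).erase (v ik))
          ((Finset.univ.filter (fun i : Fin (2 * r * b) => (i : ℕ) < k)).biUnion
            (fun i => ({a i, b' i, d i, e i} : Finset (Fin n))))
        rw [← hSdef] at h3
        have h4 : S.card ≤ 2 * r * b + 2 * r * b * 4 := le_trans h3 (add_le_add h1 h2)
        nlinarith [Nat.zero_le (r * b)]
      have hvnot : v ik ∉ S := by
        rw [hSdef]
        intro hmem
        rcases Finset.mem_union.mp hmem with h | h
        · exact Finset.notMem_erase _ _ h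
        · obtain ⟨i, hi, hx⟩ := Finset.mem_biUnion.mp h
          have hi' := (Finset.mem_filter.mp hi).2
          have hprops := (H1 i hi').2 ik
          simp only [Finset.mem_insert, Finset.mem_singleton] at hx
          rcases hx with h' | h' | h' | h'
          · exact hprops.1 h'.symm
          · exact hprops.2.1 h'.symm
          · exact hprops.2.2.1 h'.symm
          · exact hprops.2.2.2 h'.symm
      obtain ⟨a0, b0, d0, e0, hbow, ⟨haS, hbS, hdS, heS⟩, hnev⟩ :=
        one_bowtie hr hb1 Hmatch (hvX ik) S hScard
      have hnewv : ∀ (x : Fin n), x ∉ S → x ≠ v ik → ∀ j, x ≠ v j := by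
        intro x hxS hxik j
        by_cases hj : j = ik
        · exact hj ▸ hxik
        · exact fun h => hxS (h ▸ hvS j hj)
      set A : Fin (2 * r * b) → Fin n := fun i => if (i : ℕ) < k then a i else a0 with hA
      set B : Fin (2 * r * b) → Fin n := fun i => if (i : ℕ) < k then b' i else b0 with hB
      set D : Fin (2 * r * b) → Fin n := fun i => if (i : ℕ) < k then d i else d0 with hD
      set E : Fin (2 * r * b) → Fin n := fun i => if (i : ℕ) < k then e i else e0 with hE
      have hred : ∀ i : Fin (2 * r * b), (i : ℕ) < k →
          A i = a i ∧ B i = b' i ∧ D i = d i ∧ E i = e i := by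
        intro i h
        exact ⟨if_pos h, if_pos h, if_pos h, if_pos h⟩
      have hredk : A ik = a0 ∧ B ik = b0 ∧ D ik = d0 ∧ E ik = e0 :=
        ⟨if_neg (Nat.lt_irrefl k), if_neg (Nat.lt_irrefl k),
          if_neg (Nat.lt_irrefl k), if_neg (Nat.lt_irrefl k)⟩
      refine ⟨A, B, D, E, ?_, ?_⟩
      · intro i hi
        by_cases h : (i : ℕ) < k
        · obtain ⟨ra, rb, rd, re⟩ := hred i h
          rw [ra, rb, rd, re]
          exact H1 i h
        · have hieq : i = ik := by apply Fin.ext; show (i : ℕ) = k; omega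
          subst hieq
          obtain ⟨ra, rb, rd, re⟩ := hredk
          rw [ra, rb, rd, re]
          refine ⟨hbow, ?_⟩
          intro j
          exact ⟨hnewv a0 haS hnev.1 j, hnewv b0 hbS hnev.2.1 j,
            hnewv d0 hdS hnev.2.2.1 j, hnewv e0 heS hnev.2.2.2 j⟩
      · intro i i' hi hi' hne
        by_cases h : (i : ℕ) < k <;> by_cases h' : (i' : ℕ) < k
        · obtain ⟨ra, rb, rd, re⟩ := hred i h
          obtain ⟨ra', rb', rd', re'⟩ := hred i' h'
          rw [ra, rb, rd, re, ra', rb', rd', re']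
          exact H2 i i' h h' hne
        · have hieq : i' = ik := by apply Fin.ext; show (i' : ℕ) = k; omega
          subst hieq
          obtain ⟨ra, rb, rd, re⟩ := hred i h
          obtain ⟨ra', rb', rd', re'⟩ := hredk
          rw [ra, rb, rd, re, ra', rb', rd', re']
          rw [Finset.disjoint_right]
          intro x hx hx'
          have hxS := holdsub i h hx'
          simp only [Finset.mem_insert, Finset.mem_singleton] at hx
          rcases hx with rfl | rfl | rfl | rfl
          · exact haS hxS
          · exact hbS hxS
          · exact hdS hxS
          · exact heS hxS
        · have hieq : i = ik := by apply Fin.ext; show (i : ℕ) = k; omega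
          subst hieq
          obtain ⟨ra, rb, rd, re⟩ := hredk
          obtain ⟨ra', rb', rd', re'⟩ := hred i' h'
          rw [ra, rb, rd, re, ra', rb', rd', re']
          rw [Finset.disjoint_left]
          intro x hx hx'
          have hxS := holdsub i' h' hx'
          simp only [Finset.mem_insert, Finset.mem_singleton] at hx
          rcases hx with rfl | rfl | rfl | rfl
          · exact haS hxS
          · exact hbS hxS
          · exact hdS hxS
          · exact heS hxS
        · exact absurd (Fin.ext (by omega) : i = i') hne
  obtain ⟨a, b', d, e, H1, H2⟩ := main (2 * r * b) le_rfl
  refine ⟨v, a, b', d, e, fun i => (H1 i i.isLt).1, ?_⟩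
  intro i j hij
  rw [Finset.disjoint_left]
  intro x hx hx'
  simp only [Finset.mem_insert, Finset.mem_singleton] at hx hx'
  have h4 := H2 i j i.isLt j.isLt hij
  rw [Finset.disjoint_left] at h4
  have hPi := (H1 i i.isLt).2
  have hPj := (H1 j j.isLt).2
  rcases hx with rfl | rfl | rfl | rfl | rfl
  · rcases hx' with h | h | h | h | h
    · exact hij (hvinj h)
    · exact (hPj i).1 h.symm
    · exact (hPj i).2.1 h.symm
    · exact (hPj i).2.2.1 h.symm
    · exact (hPj i).2.2.2 h.symm
  · have hnot := h4 (show a i ∈ ({a i, b' i, d i, e i} : Finset (Fin n)) by simp)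
    rcases hx' with h | h | h | h | h
    · exact (hPi j).1 h
    all_goals exact hnot (by simp [h])
  · have hnot := h4 (show b' i ∈ ({a i, b' i, d i, e i} : Finset (Fin n)) by simp)
    rcases hx' with h | h | h | h | h
    · exact (hPi j).2.1 h
    all_goals exact hnot (by simp [h])
  · have hnot := h4 (show d i ∈ ({a i, b' i, d i, e i} : Finset (Fin n)) by simp)
    rcases hx' with h | h | h | h | h
    · exact (hPi j).2.2.1 h
    all_goals exact hnot (by simp [h])
  · have hnot := h4 (show e i ∈ ({a i, b' i, d i, e i} : Finset (Fin n)) by simp)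
    rcases hx' with h | h | h | h | h
    · exact (hPi j).2.2.2 h
    all_goals exact hnot (by simp [h])
end

section
/- Let r ≥ 2 be an integer, let n be sufficiently large, let b be an integer with 1 ≤ b ≤ 2^{-10} r^{-2} n, and set t = 2^5 r b, s = 8rb and α = (r+1)/(2r). Let G be a graph on n vertices with minimum degree δ(G) ≥ αn and let χ be an r-colouring of E(G) such that for each colour c ∈ {1,…,r} and each vertex v there exists a matching in G[N(v)] with at least 2^9 r b edges none of which has colour c. If c ∈ {1,…,r} is a colour with |Y_c| ≥ s/4, then G contains at least s/4 pairwise vertex-disjoint bowties of c-type II. -/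
open SimpleGraph
open scoped Classical

/-- `Y_c`: the set of vertices `v` such that `B(v,c)` (the bipartite subgraph of
`G[N(v)]` between `N_c(v)` and `N(v) \ N_c(v)`) contains a matching with at least `4t`
edges, none of colour `c`. -/
def Yset {n r : ℕ} (G : SimpleGraph (Fin n)) (χ : Sym2 (Fin n) → Fin r) (c : Fin r)
    (t : ℕ) : Set (Fin n) :=
  {v | ∃ M : Finset (Sym2 (Fin n)), MatchingIn M G ∧
    (∀ e ∈ M, ∀ w ∈ e, G.Adj v w) ∧
    (∀ e ∈ M, ∃ a b : Fin n, e = s(a, b) ∧ χ s(v, a) = c ∧ χ s(v, b) ≠ c) ∧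
    (∀ e ∈ M, χ e ≠ c) ∧ 4 * t ≤ M.card}

/-- A bowtie of `c`-type II: the two side-edges have distinct colours, the side-edge
`a b` has colour `c`, and the two center-edges `z a`, `z b` sharing an endpoint with it
do not have colour `c`. -/
def IsBowtieTypeII {V : Type*} {r : ℕ} (G : SimpleGraph V) (χ : Sym2 V → Fin r)
    (c : Fin r) (z a b d e : V) : Prop :=
  IsBowtie G z a b d e ∧
  χ s(a, b) = c ∧ χ s(a, b) ≠ χ s(d, e) ∧ χ s(z, a) ≠ c ∧ χ s(z, b) ≠ c

lemma card_five {α : Type*} [DecidableEq α] (a b c d e : α) :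
    ({a,b,c,d,e} : Finset α).card ≤ 5 := by
  have h2 : ({d,e} : Finset α).card ≤ 2 :=
    (Finset.card_insert_le _ _).trans (by simp)
  have h3 : ({c,d,e} : Finset α).card ≤ 3 :=
    (Finset.card_insert_le _ _).trans (by omega)
  have h4 : ({b,c,d,e} : Finset α).card ≤ 4 :=
    (Finset.card_insert_le _ _).trans (by omega)
  exact (Finset.card_insert_le _ _).trans (by omega)

lemma matching_avoid {V : Type*} [DecidableEq V] {G : SimpleGraph V} {M : Finset (Sym2 V)}
    (hM : MatchingIn M G) (U : Finset V) (h : U.card < M.card) :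
    ∃ e ∈ M, ∀ w ∈ e, w ∉ U := by
  by_contra hc
  push_neg at hc
  have hex : ∀ e ∈ M, ∃ w, w ∈ e ∧ w ∈ U := fun e he => by
    obtain ⟨w, hw1, hw2⟩ := hc e he; exact ⟨w, hw1, hw2⟩
  obtain ⟨e0, he0⟩ : ∃ e, e ∈ M := Finset.card_pos.mp (by omega) |>.exists_mem
  obtain ⟨w0, -, -⟩ := hex e0 he0
  have key : M.card ≤ U.card := by
    refine Finset.card_le_card_of_injOn
      (fun e => if h : ∃ w, w ∈ e ∧ w ∈ U then h.choose else w0) ?_ ?_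
    · intro e he
      simp only [dif_pos (hex e he)]
      exact (hex e he).choose_spec.2
    · intro e1 he1 e2 he2 heq
      simp only [dif_pos (hex e1 he1), dif_pos (hex e2 he2)] at heq
      by_contra hne
      exact hM.2 e1 he1 e2 he2 hne (hex e1 he1).choose
        ⟨(hex e1 he1).choose_spec.1, heq ▸ (hex e2 he2).choose_spec.1⟩
  omega

lemma step_lemma {n r : ℕ} {G : SimpleGraph (Fin n)} {χ : Sym2 (Fin n) → Fin r} {c : Fin r}
    {b : ℕ} (hr : 2 ≤ r) (hb : 1 ≤ b)
    (hM : ∀ (c : Fin r) (v : Fin n), ∃ M : Finset (Sym2 (Fin n)), MatchingIn M G ∧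
      (∀ e ∈ M, ∀ w ∈ e, G.Adj v w) ∧ (∀ e ∈ M, χ e ≠ c) ∧ 2 ^ 9 * r * b ≤ M.card)
    {v : Fin n} (hv : v ∈ Yset G χ c (2 ^ 5 * r * b))
    (U : Finset (Fin n)) (hU : U.card ≤ 12 * r * b) (hvU : v ∈ U) :
    ∃ z x d e : Fin n, IsBowtieTypeII G χ c z v x d e ∧
      z ∉ U ∧ x ∉ U ∧ d ∉ U ∧ e ∉ U := by
  have hrb : 2 ≤ r * b := le_trans hr (Nat.le_mul_of_pos_right r (by omega))
  obtain ⟨M, hmatch, hadj, hstruct, hcol, hcard⟩ := hv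
  have hcard' : U.card < M.card := by
    have : 4 * (2 ^ 5 * r * b) = 128 * (r * b) := by ring
    rw [this] at hcard
    have : 12 * r * b = 12 * (r * b) := by ring
    omega
  obtain ⟨e0, he0, he0U⟩ := matching_avoid hmatch U hcard'
  obtain ⟨a0, b0, rfl, hva0, hvb0⟩ := hstruct e0 he0
  have hadjva : G.Adj v a0 := hadj _ he0 a0 (Sym2.mem_mk_left _ _)
  have hadjvb : G.Adj v b0 := hadj _ he0 b0 (Sym2.mem_mk_right _ _)
  have hadjab : G.Adj a0 b0 := (SimpleGraph.mem_edgeSet G).mp (hmatch.1 _ he0)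
  have ha0U : a0 ∉ U := he0U a0 (Sym2.mem_mk_left _ _)
  have hb0U : b0 ∉ U := he0U b0 (Sym2.mem_mk_right _ _)
  -- second triangle at b0
  obtain ⟨M', hmatch', hadj', hcol', hcard2⟩ := hM c b0
  have hcard2' : (insert a0 U).card < M'.card := by
    have h1 : (insert a0 U).card ≤ U.card + 1 := Finset.card_insert_le _ _
    have : 2 ^ 9 * r * b = 512 * (r * b) := by ring
    rw [this] at hcard2
    have : 12 * r * b = 12 * (r * b) := by ring
    omega
  obtain ⟨e1, he1, he1U⟩ := matching_avoid hmatch' (insert a0 U) hcard2'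
  obtain ⟨⟨d, e⟩, rfl⟩ := Quot.exists_rep e1
  have hmemd : d ∈ s(d, e) := Sym2.mem_mk_left _ _
  have hmeme : e ∈ s(d, e) := Sym2.mem_mk_right _ _
  have he1E : s(d, e) ∈ M' := he1
  have hadjbd : G.Adj b0 d := hadj' _ he1E d hmemd
  have hadjbe : G.Adj b0 e := hadj' _ he1E e hmeme
  have hadjde : G.Adj d e := (SimpleGraph.mem_edgeSet G).mp (hmatch'.1 _ he1E)
  have hdU : d ∉ insert a0 U := he1U d hmemd
  have heU : e ∉ insert a0 U := he1U e hmeme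
  have hdv : d ≠ v := fun h => (Finset.mem_insert.not.mp hdU) (Or.inr (h ▸ hvU))
  have hev : e ≠ v := fun h => (Finset.mem_insert.not.mp heU) (Or.inr (h ▸ hvU))
  have hda : d ≠ a0 := fun h => hdU (Finset.mem_insert.mpr (Or.inl h))
  have hea : e ≠ a0 := fun h => heU (Finset.mem_insert.mpr (Or.inl h))
  refine ⟨b0, a0, d, e, ⟨⟨hadjvb.symm, hadjab.symm, hadjva, hadjbd, hadjbe, hadjde, ?_⟩,
    ?_, ?_, ?_, ?_⟩, hb0U, ha0U, fun h => hdU (Finset.mem_insert.mpr (Or.inr h)),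
    fun h => heU (Finset.mem_insert.mpr (Or.inr h))⟩
  · -- Nodup [b0, v, a0, d, e]
    simp only [List.nodup_cons, List.mem_cons, List.not_mem_nil, or_false,
      List.mem_singleton, List.nodup_nil, and_true, not_or]
    exact ⟨⟨hadjvb.ne', hadjab.ne', hadjbd.ne, hadjbe.ne⟩,
      ⟨hadjva.ne, fun h => hdv h.symm, fun h => hev h.symm⟩,
      ⟨fun h => hda h.symm, fun h => hea h.symm⟩, hadjde.ne, not_false⟩
  · exact hva0
  · rw [hva0]; exact fun h => (hcol' _ he1E) h.symm
  · rwa [Sym2.eq_swap]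
  · rw [Sym2.eq_swap]; exact hcol _ he0

/-- Let `r ≥ 2`. For all sufficiently large `n`, all
`1 ≤ b ≤ 2⁻¹⁰ r⁻² n`, with `t = 2⁵ r b` and `s = 8 r b`: let `G` be a graph on `n`
vertices with minimum degree at least `(r+1)n/(2r)` and `χ` an `r`-colouring such that
for each colour `c` and vertex `v` there is a matching in `G[N(v)]` with at least
`2⁹ r b` edges none of colour `c`. If `|Y_c| ≥ s/4` for some colour `c`, then `G`
contains at least `s/4 = 2rb` pairwise vertex-disjoint bowties of `c`-type II. -/
theorem stmt_17 (r : ℕ) (hr : 2 ≤ r) :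
    ∃ N : ℕ, ∀ n ≥ N, ∀ b : ℕ, 1 ≤ b → (b : ℝ) ≤ 2⁻¹ ^ 10 * ((r : ℝ))⁻¹ ^ 2 * n →
      ∀ G : SimpleGraph (Fin n),
        (∀ u : Fin n, ((r : ℝ) + 1) / (2 * r) * n ≤ ((G.neighborSet u).ncard : ℝ)) →
        ∀ χ : Sym2 (Fin n) → Fin r,
          (∀ (c : Fin r) (v : Fin n), ∃ M : Finset (Sym2 (Fin n)), MatchingIn M G ∧
            (∀ e ∈ M, ∀ w ∈ e, G.Adj v w) ∧ (∀ e ∈ M, χ e ≠ c) ∧ 2 ^ 9 * r * b ≤ M.card) →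
          ∀ c : Fin r,
            ((8 * r * b : ℕ) : ℝ) / 4 ≤ ((Yset G χ c (2 ^ 5 * r * b)).ncard : ℝ) →
            ∃ z a b' d e : Fin (2 * r * b) → Fin n,
              (∀ i, IsBowtieTypeII G χ c (z i) (a i) (b' i) (d i) (e i)) ∧
              ∀ i j, i ≠ j →
                Disjoint ({z i, a i, b' i, d i, e i} : Finset (Fin n))
                  ({z j, a j, b' j, d j, e j} : Finset (Fin n)) := by
  refine ⟨1, ?_⟩
  intro n hn b hb hbn G hdeg χ hM c hY
  have hfin : (Yset G χ c (2 ^ 5 * r * b)).Finite := Set.toFinite _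
  have hY' : 2 * r * b ≤ hfin.toFinset.card := by
    rw [← Set.ncard_eq_toFinset_card _ hfin]
    have h2 : ((2 * r * b : ℕ) : ℝ) ≤ ((Yset G χ c (2 ^ 5 * r * b)).ncard : ℝ) := by
      push_cast at hY ⊢
      linarith
    exact_mod_cast h2
  obtain ⟨S, hSsub, hScard⟩ := Finset.exists_subset_card_eq hY'
  set k := 2 * r * b with hk
  -- enumeration of S
  let v : Fin k → Fin n := fun i => (S.equivFin.symm (Fin.cast hScard.symm i) : Fin n)
  have hvS : ∀ i, v i ∈ S := fun i => (S.equivFin.symm (Fin.cast hScard.symm i)).2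
  have hvY : ∀ i, v i ∈ Yset G χ c (2 ^ 5 * r * b) := fun i =>
    hfin.mem_toFinset.mp (hSsub (hvS i))
  have hvinj : Function.Injective v := by
    intro i j hij
    have h1 : (Fin.cast hScard.symm i) = Fin.cast hScard.symm j :=
      S.equivFin.symm.injective (Subtype.ext hij)
    simpa [Fin.ext_iff] using h1
  have key : ∀ m, (hm : m ≤ k) → ∃ z a bb d e : Fin m → Fin n,
      (∀ i, IsBowtieTypeII G χ c (z i) (a i) (bb i) (d i) (e i)) ∧
      (∀ i : Fin m, a i = v ⟨i.1, lt_of_lt_of_le i.2 hm⟩) ∧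
      (∀ i, z i ∉ S ∧ bb i ∉ S ∧ d i ∉ S ∧ e i ∉ S) ∧
      (∀ i j, i ≠ j →
        Disjoint ({z i, a i, bb i, d i, e i} : Finset (Fin n))
          ({z j, a j, bb j, d j, e j} : Finset (Fin n))) := by
    intro m
    induction m with
    | zero =>
      intro _
      exact ⟨Fin.elim0, Fin.elim0, Fin.elim0, Fin.elim0, Fin.elim0,
        fun i => i.elim0, fun i => i.elim0, fun i => i.elim0, fun i => i.elim0⟩
    | succ m ih =>
      intro hm
      obtain ⟨z, a, bb, d, e, hbow, ha, hnS, hdisj⟩ := ih (le_trans (Nat.le_succ m) hm)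
      set U : Finset (Fin n) :=
        S ∪ Finset.univ.biUnion (fun j : Fin m => {z j, a j, bb j, d j, e j}) with hUdef
          -- card bound
      have hUcard : U.card ≤ 12 * r * b := by
        have h1 : U.card ≤ S.card + (Finset.univ.biUnion
            (fun j : Fin m => ({z j, a j, bb j, d j, e j} : Finset (Fin n)))).card :=
          Finset.card_union_le _ _
        have h2 : (Finset.univ.biUnion
            (fun j : Fin m => ({z j, a j, bb j, d j, e j} : Finset (Fin n)))).card ≤ m * 5 := by
          refine le_trans (Finset.card_biUnion_le) ?_
          calc ∑ j : Fin m, ({z j, a j, bb j, d j, e j} : Finset (Fin n)).card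
              ≤ ∑ _j : Fin m, 5 := Finset.sum_le_sum (fun j _ => card_five _ _ _ _ _)
            _ = m * 5 := by simp [Finset.sum_const, mul_comm]
        have hmle : m ≤ 2 * r * b := le_trans (Nat.le_succ m) hm
        calc U.card ≤ S.card + (Finset.univ.biUnion
              (fun j : Fin m => ({z j, a j, bb j, d j, e j} : Finset (Fin n)))).card := h1
          _ ≤ 2 * r * b + m * 5 := add_le_add (le_of_eq hScard) h2
          _ ≤ 2 * r * b + (2 * r * b) * 5 :=
              Nat.add_le_add_left (Nat.mul_le_mul_right 5 hmle) _
          _ = 12 * r * b := by ring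
      have hmk : m < k := hm
      have hvmU : v ⟨m, hmk⟩ ∈ U := Finset.mem_union_left _ (hvS _)
      obtain ⟨z0, x0, d0, e0, hbow0, hz0, hx0, hd0, he0⟩ :=
        step_lemma hr hb hM (hvY ⟨m, hmk⟩) U hUcard hvmU
      have hsubU : ∀ j : Fin m, ({z j, a j, bb j, d j, e j} : Finset (Fin n)) ⊆ U := by
        intro j w hw
        exact Finset.mem_union_right _ (Finset.mem_biUnion.mpr ⟨j, Finset.mem_univ _, hw⟩)
      have hSU : S ⊆ U := Finset.subset_union_left
      -- new vertices avoid old bowties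
      have hnewold : ∀ j : Fin m,
          Disjoint ({z0, v ⟨m, hmk⟩, x0, d0, e0} : Finset (Fin n))
            ({z j, a j, bb j, d j, e j} : Finset (Fin n)) := by
        intro j
        rw [Finset.disjoint_left]
        intro w hw hwold
        have hwU : w ∈ U := hsubU j hwold
        simp only [Finset.mem_insert, Finset.mem_singleton] at hw
        rcases hw with rfl | rfl | rfl | rfl | rfl
        · exact hz0 hwU
        · -- w = v ⟨m, hmk⟩
          simp only [Finset.mem_insert, Finset.mem_singleton] at hwold
          obtain ⟨hz, hb', hd, he⟩ := hnS j
          rcases hwold with h | h | h | h | h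
          · exact hz (h ▸ hvS _)
          · have : v ⟨m, hmk⟩ = v ⟨j.1, lt_of_lt_of_le j.2 (le_trans (Nat.le_succ m) hm)⟩ :=
              h.trans (ha j)
            have := hvinj this
            simp only [Fin.mk.injEq] at this
            omega
          · exact hb' (h ▸ hvS _)
          · exact hd (h ▸ hvS _)
          · exact he (h ▸ hvS _)
        · exact hx0 hwU
        · exact hd0 hwU
        · exact he0 hwU
      refine ⟨Fin.snoc z z0, Fin.snoc a (v ⟨m, hmk⟩), Fin.snoc bb x0, Fin.snoc d d0,
        Fin.snoc e e0, ?_, ?_, ?_, ?_⟩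
      · intro i
        refine Fin.lastCases ?_ ?_ i
        · simpa [Fin.snoc_last] using hbow0
        · intro j; simpa [Fin.snoc_castSucc] using hbow j
      · intro i
        refine Fin.lastCases ?_ ?_ i
        · simp [Fin.snoc_last]
        · intro j
          simp only [Fin.snoc_castSucc]
          rw [ha j]
          rfl
      · intro i
        refine Fin.lastCases ?_ ?_ i
        · simp only [Fin.snoc_last]
          exact ⟨fun h => hz0 (hSU h), fun h => hx0 (hSU h),
            fun h => hd0 (hSU h), fun h => he0 (hSU h)⟩
        · intro j; simpa [Fin.snoc_castSucc] using hnS j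
      · intro i j hij
        rcases Fin.eq_castSucc_or_eq_last i with ⟨i', rfl⟩ | rfl <;>
          rcases Fin.eq_castSucc_or_eq_last j with ⟨j', rfl⟩ | rfl
        · simp only [Fin.snoc_castSucc]
          exact hdisj i' j' (fun h => hij (congrArg Fin.castSucc h))
        · simp only [Fin.snoc_last, Fin.snoc_castSucc]
          exact (hnewold i').symm
        · simp only [Fin.snoc_last, Fin.snoc_castSucc]
          exact hnewold j'
        · exact absurd rfl hij
  obtain ⟨z, a, bb, d, e, hbow, _, _, hdisj⟩ := key k le_rfl
  exact ⟨z, a, bb, d, e, hbow, hdisj⟩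
end
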